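/- arXiv:2109.10225 — 12 statements merged into one kernel-verified Lean document; each statement's English description precedes it below -/
import Mathlib

section
/- Let p be an odd prime dividing a such that the Legendre symbol of -bc modulo p equals -1, and let n be an integer such that the Legendre symbol of (a/p)·n modulo p equals -1 (where a/p denotes the integer quotient of a by p). Then the integer n·p is not represented over the rationals by the form ax² + by² + cz²; that is, there are no rational numbers x, y, z with ax² + by² + cz² = n·p. -/
/-!
Write `a = p a'`. Reducing `p a' X² + b Y² + c Z² = n p W²` modulo `p` gives `b Y² + c Z² ≡ 0`,
and since `-bc` is not a square mod `p` this forces `p ∣ Y, Z`. Dividing by `p`, the equation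
becomes `a' X² ≡ n W²` mod `p`, and since `a' n` is not a square this forces `p ∣ X, W`. So every
integral solution descends to one with `W` divided by `p`; hence `W` is divisible by every power
of `p`, i.e. `W = 0`, and there is no rational solution.
-/

theorem eq_zero_of_mul_sq_add_mul_sq_eq_zero {F : Type*} [Field F] {b c y z : F}
    (hbc : ¬ IsSquare (-(b * c))) (h : b * y ^ 2 + c * z ^ 2 = 0) : y = 0 ∧ z = 0 := by
  have hz : z = 0 := by
    by_contra hz
    exact hbc ⟨b * y / z, by field_simp; linear_combination (-b) * h⟩
  subst hz
  have hb : b ≠ 0 := by rintro rfl; exact hbc (by simp)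
  exact ⟨pow_eq_zero_iff two_ne_zero |>.1 <| (mul_eq_zero.1 (by simpa using h)).resolve_left hb,
    rfl⟩

theorem Int.prime_dvd_of_dvd_mul_sq_add_mul_sq {p : ℕ} [Fact p.Prime] {b c y z : ℤ}
    (hbc : ¬ IsSquare ((-(b * c) : ℤ) : ZMod p)) (h : (p : ℤ) ∣ b * y ^ 2 + c * z ^ 2) :
    (p : ℤ) ∣ y ∧ (p : ℤ) ∣ z := by
  simp only [← ZMod.intCast_zmod_eq_zero_iff_dvd] at h ⊢
  push_cast at hbc h
  exact eq_zero_of_mul_sq_add_mul_sq_eq_zero hbc h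

section Descent

variable {p : ℕ} [Fact p.Prime] {a' b c n : ℤ}

theorem exists_eq_prime_mul_of_ternary_eq (hbc : ¬ IsSquare ((-(b * c) : ℤ) : ZMod p))
    (han : ¬ IsSquare ((a' * n : ℤ) : ZMod p)) {x y z w : ℤ}
    (h : p * a' * x ^ 2 + b * y ^ 2 + c * z ^ 2 = n * p * w ^ 2) :
    ∃ x' y' z' w' : ℤ, w = p * w' ∧ p * a' * x' ^ 2 + b * y' ^ 2 + c * z' ^ 2 = n * p * w' ^ 2 := by
  have hp : (p : ℤ) ≠ 0 := by exact_mod_cast (Fact.out : p.Prime).ne_zero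
  have hyz : (p : ℤ) ∣ b * y ^ 2 + c * z ^ 2 := ⟨n * w ^ 2 - a' * x ^ 2, by linear_combination h⟩
  obtain ⟨⟨y', rfl⟩, ⟨z', rfl⟩⟩ := Int.prime_dvd_of_dvd_mul_sq_add_mul_sq hbc hyz
  have hxw : (p : ℤ) ∣ a' * x ^ 2 + -n * w ^ 2 :=
    ⟨-(b * y' ^ 2 + c * z' ^ 2), mul_left_cancel₀ hp (by linear_combination h)⟩
  have han' : ¬ IsSquare ((-(a' * -n) : ℤ) : ZMod p) := by rwa [mul_neg, neg_neg]
  obtain ⟨⟨x', rfl⟩, ⟨w', rfl⟩⟩ := Int.prime_dvd_of_dvd_mul_sq_add_mul_sq han' hxw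
  refine ⟨x', y', z', w', rfl, mul_left_cancel₀ (pow_ne_zero 2 hp) ?_⟩
  linear_combination h

theorem eq_zero_of_ternary_eq (hbc : ¬ IsSquare ((-(b * c) : ℤ) : ZMod p))
    (han : ¬ IsSquare ((a' * n : ℤ) : ZMod p)) {x y z w : ℤ}
    (h : p * a' * x ^ 2 + b * y ^ 2 + c * z ^ 2 = n * p * w ^ 2) : w = 0 := by
  have hdvd : ∀ k : ℕ, ∀ x y z w : ℤ,
      p * a' * x ^ 2 + b * y ^ 2 + c * z ^ 2 = n * p * w ^ 2 → (p : ℤ) ^ k ∣ w := by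
    intro k
    induction k with
    | zero => simp
    | succ k ih =>
      intro x y z w h
      obtain ⟨x', y', z', w', rfl, h'⟩ := exists_eq_prime_mul_of_ternary_eq hbc han h
      rw [pow_succ']
      exact mul_dvd_mul_left _ (ih x' y' z' w' h')
  refine Int.eq_zero_of_dvd_of_natAbs_lt_natAbs (hdvd w.natAbs x y z w h) ?_
  rw [Int.natAbs_pow, Int.natAbs_natCast]
  exact Nat.lt_pow_self (Fact.out : p.Prime).one_lt

end Descent

theorem Rat.exists_eq_div_common_denom (x y z : ℚ) :
    ∃ X Y Z W : ℤ, W ≠ 0 ∧ x = X / W ∧ y = Y / W ∧ z = Z / W := by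
  refine ⟨x.num * y.den * z.den, y.num * x.den * z.den, z.num * x.den * y.den,
    x.den * y.den * z.den, by positivity, ?_, ?_, ?_⟩ <;>
    rw [eq_div_iff (by positivity)] <;> push_cast
  · linear_combination (y.den * z.den : ℚ) * x.mul_den_eq_num
  · linear_combination (x.den * z.den : ℚ) * y.mul_den_eq_num
  · linear_combination (x.den * y.den : ℚ) * z.mul_den_eq_num

theorem stmt0_general (a b c : ℤ)
    (p : ℕ) (hp : p.Prime) (hpa : (p : ℤ) ∣ a)
    (hleg1 : jacobiSym (-b * c) p = -1)
    (n : ℤ) (hleg2 : jacobiSym ((a / (p : ℤ)) * n) p = -1) :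
    ¬ ∃ x y z : ℚ, (a : ℚ) * x ^ 2 + (b : ℚ) * y ^ 2 + (c : ℚ) * z ^ 2 = ((n * p : ℤ) : ℚ) := by
  have : Fact p.Prime := ⟨hp⟩
  rw [← jacobiSym.legendreSym.to_jacobiSym, legendreSym.eq_neg_one_iff] at hleg1 hleg2
  rw [neg_mul] at hleg1
  obtain ⟨a', rfl⟩ := hpa
  rw [Int.mul_ediv_cancel_left _ (by exact_mod_cast hp.ne_zero)] at hleg2
  rintro ⟨x, y, z, h⟩
  obtain ⟨X, Y, Z, W, hW, rfl, rfl, rfl⟩ := Rat.exists_eq_div_common_denom x y z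
  refine hW (eq_zero_of_ternary_eq hleg1 hleg2 (x := X) (y := Y) (z := Z) ?_)
  field_simp at h
  have hℚ : ((p * a' * X ^ 2 + b * Y ^ 2 + c * Z ^ 2 : ℤ) : ℚ) = ((n * p * W ^ 2 : ℤ) : ℚ) := by
    push_cast at h ⊢
    linear_combination h
  exact_mod_cast hℚ

theorem stmt0 (a b c : ℤ) (ha : a ≠ 0) (hb : b ≠ 0) (hc : c ≠ 0)
    (hsa : Squarefree a) (hsb : Squarefree b) (hsc : Squarefree c)
    (hab : IsCoprime a b) (hac : IsCoprime a c) (hbc : IsCoprime b c)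
    (p : ℕ) (hp : p.Prime) (hp2 : p ≠ 2) (hpa : (p : ℤ) ∣ a)
    (hleg1 : jacobiSym (-b * c) p = -1)
    (n : ℤ) (hleg2 : jacobiSym ((a / (p : ℤ)) * n) p = -1) :
    ¬ ∃ x y z : ℚ, (a : ℚ) * x ^ 2 + (b : ℚ) * y ^ 2 + (c : ℚ) * z ^ 2 = ((n * p : ℤ) : ℚ) :=
  stmt0_general a b c p hp hpa hleg1 n hleg2
end

section
/- Suppose a, b, c are positive, and suppose that for every odd prime factor p of a the Legendre symbol of -bc modulo p equals 1, for every odd prime factor p of b the Legendre symbol of -ac modulo p equals 1, and for every odd prime factor p of c the Legendre symbol of -ab modulo p equals 1. Then either a ≡ b ≡ c (mod 4), or exactly one of a, b, c is even and, writing e for the even one and f, g for the two odd ones, one has f + g ≡ e (mod 8) or f + g ≡ 2e (mod 8). -/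
open ZMod

lemma jac_one_of_primes (x : ℤ) : ∀ n : ℕ, n % 2 = 1 →
    (∀ p : ℕ, p.Prime → p ∣ n → jacobiSym x p = 1) → jacobiSym x n = 1 := by
  intro n
  induction n using Nat.strong_induction_on with
  | _ n ih =>
    intro hodd hp
    rcases eq_or_ne n 1 with rfl | hn1
    · exact jacobiSym.one_right x
    · have hn0 : n ≠ 0 := by omega
      have hpf : n.minFac.Prime := Nat.minFac_prime hn1
      obtain ⟨m, hm⟩ := n.minFac_dvd
      have hm0 : m ≠ 0 := by rintro rfl; simp at hm; omega
      have hmlt : m < n := by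
        have h2 : 2 ≤ n.minFac := hpf.two_le
        calc m < 2 * m := by omega
        _ ≤ n.minFac * m := by exact Nat.mul_le_mul_right m h2
        _ = n := hm.symm
      have hmn : m ∣ n := hm ▸ Dvd.intro_left _ rfl
      have hmodd : m % 2 = 1 := by
        rcases Nat.even_or_odd m with he | ho
        · exfalso
          have h2 : 2 ∣ n := dvd_trans he.two_dvd hmn
          omega
        · exact Nat.odd_iff.mp ho
      rw [hm, jacobiSym.mul_right' x hpf.ne_zero hm0]
      rw [hp n.minFac hpf n.minFac_dvd,
        ih m hmlt hmodd (fun p pp pd => hp p pp (pd.trans hmn)), mul_one]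


lemma negpow (m n : ℕ) : ((-1:ℤ))^(m*n) = if m % 2 = 1 ∧ n % 2 = 1 then -1 else 1 := by
  rcases Nat.even_or_odd (m*n) with h|h
  · rw [h.neg_one_pow, eq_comm, if_neg]
    rw [Nat.even_mul, Nat.even_iff, Nat.even_iff] at h; omega
  · rw [h.neg_one_pow, if_pos]
    rw [Nat.odd_mul, Nat.odd_iff, Nat.odd_iff] at h; exact h

lemma key_odd (A B C : ℕ) (hA : A % 2 = 1) (hB : B % 2 = 1) (hC : C % 2 = 1)
    (gAB : Int.gcd (A : ℤ) B = 1) (gAC : Int.gcd (A : ℤ) C = 1) (gBC : Int.gcd (B : ℤ) C = 1)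
    (h1 : jacobiSym (-(B:ℤ)*C) A = 1) (h2 : jacobiSym (-(A:ℤ)*C) B = 1)
    (h3 : jacobiSym (-(A:ℤ)*B) C = 1) :
    A % 4 = B % 4 ∧ B % 4 = C % 4 := by
  have hoA := Nat.odd_iff.mpr hA
  have hoB := Nat.odd_iff.mpr hB
  have hoC := Nat.odd_iff.mpr hC
  have e1 : χ₄ A * (jacobiSym (B:ℤ) A * jacobiSym (C:ℤ) A) = 1 := by
    rw [← jacobiSym.mul_left, ← jacobiSym.neg _ hoA, show -((B:ℤ)*C) = -(B:ℤ)*C by ring]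
    exact h1
  have e2 : χ₄ B * (jacobiSym (A:ℤ) B * jacobiSym (C:ℤ) B) = 1 := by
    rw [← jacobiSym.mul_left, ← jacobiSym.neg _ hoB, show -((A:ℤ)*C) = -(A:ℤ)*C by ring]
    exact h2
  have e3 : χ₄ C * (jacobiSym (A:ℤ) C * jacobiSym (B:ℤ) C) = 1 := by
    rw [← jacobiSym.mul_left, ← jacobiSym.neg _ hoC, show -((A:ℤ)*B) = -(A:ℤ)*B by ring]
    exact h3
  have r1 : jacobiSym (B:ℤ) A * jacobiSym (A:ℤ) B = (-1)^(B/2*(A/2)) := by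
    rw [jacobiSym.quadratic_reciprocity hoB hoA, mul_assoc, ← sq, jacobiSym.sq_one gAB, mul_one]
  have r2 : jacobiSym (C:ℤ) A * jacobiSym (A:ℤ) C = (-1)^(C/2*(A/2)) := by
    rw [jacobiSym.quadratic_reciprocity hoC hoA, mul_assoc, ← sq, jacobiSym.sq_one gAC, mul_one]
  have r3 : jacobiSym (C:ℤ) B * jacobiSym (B:ℤ) C = (-1)^(C/2*(B/2)) := by
    rw [jacobiSym.quadratic_reciprocity hoC hoB, mul_assoc, ← sq, jacobiSym.sq_one gBC, mul_one]
  have key : χ₄ A * χ₄ B * χ₄ C *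
      ((-1:ℤ)^(B/2*(A/2)) * (-1)^(C/2*(A/2)) * (-1)^(C/2*(B/2))) = 1 := by
    rw [← r1, ← r2, ← r3]
    linear_combination (χ₄ (B:ℕ) * (jacobiSym (A:ℤ) B * jacobiSym (C:ℤ) B)) *
        (χ₄ (C:ℕ) * (jacobiSym (A:ℤ) C * jacobiSym (B:ℤ) C)) * e1 +
      (χ₄ (C:ℕ) * (jacobiSym (A:ℤ) C * jacobiSym (B:ℤ) C)) * e2 + e3
  rw [χ₄_nat_eq_if_mod_four, χ₄_nat_eq_if_mod_four, χ₄_nat_eq_if_mod_four,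
    negpow, negpow, negpow, hA, hB, hC,
    show B/2 % 2 = B % 4 / 2 % 2 by omega, show A/2 % 2 = A % 4 / 2 % 2 by omega,
    show C/2 % 2 = C % 4 / 2 % 2 by omega] at key
  have h4A : A % 4 = 1 ∨ A % 4 = 3 := by omega
  have h4B : B % 4 = 1 ∨ B % 4 = 3 := by omega
  have h4C : C % 4 = 1 ∨ C % 4 = 3 := by omega
  rcases h4A with hA4 | hA4 <;> rcases h4B with hB4 | hB4 <;> rcases h4C with hC4 | hC4 <;>
    rw [hA4, hB4, hC4] at key <;> norm_num at key <;> omega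


lemma key_even (A B C : ℕ) (hA : A % 2 = 1) (hB : B % 2 = 1) (hC : C % 2 = 1)
    (gAB : Int.gcd (A : ℤ) B = 1) (gAC : Int.gcd (A : ℤ) C = 1) (gBC : Int.gcd (B : ℤ) C = 1)
    (h1 : jacobiSym (-(B:ℤ)*(2*C)) A = 1) (h2 : jacobiSym (-(A:ℤ)*(2*C)) B = 1)
    (h3 : jacobiSym (-(A:ℤ)*B) C = 1) :
    (A + B) % 8 = (2*C) % 8 ∨ (A + B) % 8 = 4 := by
  have hoA := Nat.odd_iff.mpr hA
  have hoB := Nat.odd_iff.mpr hB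
  have hoC := Nat.odd_iff.mpr hC
  have e1 : χ₄ A * (χ₈ A * (jacobiSym (B:ℤ) A * jacobiSym (C:ℤ) A)) = 1 := by
    rw [← jacobiSym.mul_left, ← jacobiSym.at_two hoA, ← jacobiSym.mul_left,
      ← jacobiSym.neg _ hoA, show -(2*((B:ℤ)*C)) = -(B:ℤ)*(2*C) by ring]
    exact h1
  have e2 : χ₄ B * (χ₈ B * (jacobiSym (A:ℤ) B * jacobiSym (C:ℤ) B)) = 1 := by
    rw [← jacobiSym.mul_left, ← jacobiSym.at_two hoB, ← jacobiSym.mul_left,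
      ← jacobiSym.neg _ hoB, show -(2*((A:ℤ)*C)) = -(A:ℤ)*(2*C) by ring]
    exact h2
  have e3 : χ₄ C * (jacobiSym (A:ℤ) C * jacobiSym (B:ℤ) C) = 1 := by
    rw [← jacobiSym.mul_left, ← jacobiSym.neg _ hoC, show -((A:ℤ)*B) = -(A:ℤ)*B by ring]
    exact h3
  have r1 : jacobiSym (B:ℤ) A * jacobiSym (A:ℤ) B = (-1)^(B/2*(A/2)) := by
    rw [jacobiSym.quadratic_reciprocity hoB hoA, mul_assoc, ← sq, jacobiSym.sq_one gAB, mul_one]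
  have r2 : jacobiSym (C:ℤ) A * jacobiSym (A:ℤ) C = (-1)^(C/2*(A/2)) := by
    rw [jacobiSym.quadratic_reciprocity hoC hoA, mul_assoc, ← sq, jacobiSym.sq_one gAC, mul_one]
  have r3 : jacobiSym (C:ℤ) B * jacobiSym (B:ℤ) C = (-1)^(C/2*(B/2)) := by
    rw [jacobiSym.quadratic_reciprocity hoC hoB, mul_assoc, ← sq, jacobiSym.sq_one gBC, mul_one]
  have key : χ₄ A * χ₄ B * χ₄ C * (χ₈ A * χ₈ B) *
      ((-1:ℤ)^(B/2*(A/2)) * (-1)^(C/2*(A/2)) * (-1)^(C/2*(B/2))) = 1 := by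
    rw [← r1, ← r2, ← r3]
    linear_combination (χ₄ (B:ℕ) * (χ₈ (B:ℕ) * (jacobiSym (A:ℤ) B * jacobiSym (C:ℤ) B))) *
        (χ₄ (C:ℕ) * (jacobiSym (A:ℤ) C * jacobiSym (B:ℤ) C)) * e1 +
      (χ₄ (C:ℕ) * (jacobiSym (A:ℤ) C * jacobiSym (B:ℤ) C)) * e2 + e3
  rw [χ₄_nat_eq_if_mod_four, χ₄_nat_eq_if_mod_four, χ₄_nat_eq_if_mod_four,
    χ₈_nat_eq_if_mod_eight, χ₈_nat_eq_if_mod_eight,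
    negpow, negpow, negpow, hA, hB, hC,
    show A % 4 = A % 8 % 4 by omega, show B % 4 = B % 8 % 4 by omega,
    show C % 4 = C % 8 % 4 by omega,
    show B/2 % 2 = B % 8 / 2 % 2 by omega, show A/2 % 2 = A % 8 / 2 % 2 by omega,
    show C/2 % 2 = C % 8 / 2 % 2 by omega] at key
  have h8A : A % 8 = 1 ∨ A % 8 = 3 ∨ A % 8 = 5 ∨ A % 8 = 7 := by omega
  have h8B : B % 8 = 1 ∨ B % 8 = 3 ∨ B % 8 = 5 ∨ B % 8 = 7 := by omega
  have h8C : C % 8 = 1 ∨ C % 8 = 3 ∨ C % 8 = 5 ∨ C % 8 = 7 := by omega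
  rcases h8A with hA8 | hA8 | hA8 | hA8 <;> rcases h8B with hB8 | hB8 | hB8 | hB8 <;>
    rcases h8C with hC8 | hC8 | hC8 | hC8 <;> rw [hA8, hB8, hC8] at key <;>
    norm_num at key <;> omega


lemma not_both_even {x y : ℤ} (h : IsCoprime x y) (hx : Even x) (hy : Even y) : False := by
  obtain ⟨u, v, huv⟩ := h
  obtain ⟨x', rfl⟩ := hx
  obtain ⟨y', rfl⟩ := hy
  have h2 : (2:ℤ) ∣ 1 := huv ▸ dvd_add
    (Dvd.dvd.mul_left ⟨x', by ring⟩ u) (Dvd.dvd.mul_left ⟨y', by ring⟩ v)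
  norm_num at h2

lemma glue_even (f g e : ℤ) (hfpos : 0 < f) (hgpos : 0 < g) (hepos : 0 < e)
    (hse : Squarefree e) (hfg : IsCoprime f g) (hfe : IsCoprime f e) (hge : IsCoprime g e)
    (hof : Odd f) (hog : Odd g) (hee : Even e)
    (hlf : ∀ p : ℕ, p.Prime → p ≠ 2 → (p:ℤ) ∣ f → jacobiSym (-g * e) p = 1)
    (hlg : ∀ p : ℕ, p.Prime → p ≠ 2 → (p:ℤ) ∣ g → jacobiSym (-f * e) p = 1)
    (hle : ∀ p : ℕ, p.Prime → p ≠ 2 → (p:ℤ) ∣ e → jacobiSym (-f * g) p = 1) :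
    f + g ≡ e [ZMOD 8] ∨ f + g ≡ 2 * e [ZMOD 8] := by
  obtain ⟨F, rfl⟩ : ∃ F : ℕ, f = (F : ℤ) := ⟨f.toNat, (Int.toNat_of_nonneg hfpos.le).symm⟩
  obtain ⟨G, rfl⟩ : ∃ G : ℕ, g = (G : ℤ) := ⟨g.toNat, (Int.toNat_of_nonneg hgpos.le).symm⟩
  obtain ⟨E, rfl⟩ : ∃ E : ℕ, e = (E : ℤ) := ⟨e.toNat, (Int.toNat_of_nonneg hepos.le).symm⟩
  have hF : F % 2 = 1 := Nat.odd_iff.mp (Int.odd_coe_nat F |>.mp hof)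
  have hG : G % 2 = 1 := Nat.odd_iff.mp (Int.odd_coe_nat G |>.mp hog)
  have hE2 : E % 2 = 0 := Nat.even_iff.mp (Int.even_coe_nat E |>.mp hee)
  obtain ⟨E', hE'⟩ : ∃ E', E = 2 * E' := ⟨E / 2, by omega⟩
  have hE'odd : E' % 2 = 1 := by
    rcases Nat.even_or_odd E' with h | h
    · exfalso
      obtain ⟨k, hk⟩ := h
      have h4 : (2 : ℤ) * 2 ∣ (E : ℤ) := ⟨(k : ℤ), by push_cast [hE', hk]; ring⟩
      have := hse 2 h4
      rw [Int.isUnit_iff] at this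
      omega
    · exact Nat.odd_iff.mp h
  have hcast : (E : ℤ) = 2 * (E' : ℤ) := by push_cast [hE']; ring
  have gFG : Int.gcd (F : ℤ) G = 1 := Int.isCoprime_iff_gcd_eq_one.mp hfg
  have hE'dvd : E' ∣ E := ⟨2, by omega⟩
  have gFE : Int.gcd (F : ℤ) E' = 1 := by
    have h1 : Int.gcd (F : ℤ) E = 1 := Int.isCoprime_iff_gcd_eq_one.mp hfe
    rw [Int.gcd_natCast_natCast] at h1 ⊢
    exact Nat.Coprime.coprime_dvd_right hE'dvd h1
  have gGE : Int.gcd (G : ℤ) E' = 1 := by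
    have h1 : Int.gcd (G : ℤ) E = 1 := Int.isCoprime_iff_gcd_eq_one.mp hge
    rw [Int.gcd_natCast_natCast] at h1 ⊢
    exact Nat.Coprime.coprime_dvd_right hE'dvd h1
  have j1 : jacobiSym (-(G:ℤ)*(2*E')) F = 1 := by
    apply jac_one_of_primes _ _ hF
    intro p pp pd
    have hp2 : p ≠ 2 := by rintro rfl; omega
    have := hlf p pp hp2 (Int.natCast_dvd_natCast.mpr pd)
    rwa [show -(G:ℤ) * E = -(G:ℤ)*(2*E') by rw [hcast]] at this
  have j2 : jacobiSym (-(F:ℤ)*(2*E')) G = 1 := by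
    apply jac_one_of_primes _ _ hG
    intro p pp pd
    have hp2 : p ≠ 2 := by rintro rfl; omega
    have := hlg p pp hp2 (Int.natCast_dvd_natCast.mpr pd)
    rwa [show -(F:ℤ) * E = -(F:ℤ)*(2*E') by rw [hcast]] at this
  have j3 : jacobiSym (-(F:ℤ)*G) E' = 1 := by
    apply jac_one_of_primes _ _ hE'odd
    intro p pp pd
    have hp2 : p ≠ 2 := by rintro rfl; omega
    have pdE : (p : ℤ) ∣ (E : ℤ) := Int.natCast_dvd_natCast.mpr (pd.trans ⟨2, by omega⟩)
    exact hle p pp hp2 pdE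
  have := key_even F G E' hF hG hE'odd gFG gFE gGE j1 j2 j3
  rcases this with h | h
  · left; show ((F:ℤ) + G) % 8 = (E:ℤ) % 8; omega
  · right; show ((F:ℤ) + G) % 8 = (2 * (E:ℤ)) % 8; omega

theorem stmt1 (a b c : ℤ) (ha : a ≠ 0) (hb : b ≠ 0) (hc : c ≠ 0)
    (hsa : Squarefree a) (hsb : Squarefree b) (hsc : Squarefree c)
    (hab : IsCoprime a b) (hac : IsCoprime a c) (hbc : IsCoprime b c)
    (hapos : 0 < a) (hbpos : 0 < b) (hcpos : 0 < c)
    (hlega : ∀ p : ℕ, p.Prime → p ≠ 2 → (p : ℤ) ∣ a → jacobiSym (-b * c) p = 1)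
    (hlegb : ∀ p : ℕ, p.Prime → p ≠ 2 → (p : ℤ) ∣ b → jacobiSym (-a * c) p = 1)
    (hlegc : ∀ p : ℕ, p.Prime → p ≠ 2 → (p : ℤ) ∣ c → jacobiSym (-a * b) p = 1) :
    (a ≡ b [ZMOD 4] ∧ b ≡ c [ZMOD 4]) ∨
    (Even a ∧ Odd b ∧ Odd c ∧ (b + c ≡ a [ZMOD 8] ∨ b + c ≡ 2 * a [ZMOD 8])) ∨
    (Odd a ∧ Even b ∧ Odd c ∧ (a + c ≡ b [ZMOD 8] ∨ a + c ≡ 2 * b [ZMOD 8])) ∨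
    (Odd a ∧ Odd b ∧ Even c ∧ (a + b ≡ c [ZMOD 8] ∨ a + b ≡ 2 * c [ZMOD 8])) := by
  rcases Int.even_or_odd a with hea | hoa
  · -- a even, so b c odd
    have hob : Odd b := (Int.even_or_odd b).resolve_left fun h => not_both_even hab hea h
    have hoc : Odd c := (Int.even_or_odd c).resolve_left fun h => not_both_even hac hea h
    refine Or.inr (Or.inl ⟨hea, hob, hoc, ?_⟩)
    apply glue_even b c a hbpos hcpos hapos hsa hbc hab.symm hac.symm hob hoc hea
    · intro p pp hp2 hd
      rw [show -c * a = -a * c by ring]; exact hlegb p pp hp2 hd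
    · intro p pp hp2 hd
      rw [show -b * a = -a * b by ring]; exact hlegc p pp hp2 hd
    · intro p pp hp2 hd
      exact hlega p pp hp2 hd
  rcases Int.even_or_odd b with heb | hob
  · have hoc : Odd c := (Int.even_or_odd c).resolve_left fun h => not_both_even hbc heb h
    refine Or.inr (Or.inr (Or.inl ⟨hoa, heb, hoc, ?_⟩))
    apply glue_even a c b hapos hcpos hbpos hsb hac hab hbc.symm hoa hoc heb
    · intro p pp hp2 hd
      rw [show -c * b = -b * c by ring]; exact hlega p pp hp2 hd
    · intro p pp hp2 hd
      exact hlegc p pp hp2 hd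
    · intro p pp hp2 hd
      exact hlegb p pp hp2 hd
  rcases Int.even_or_odd c with hec | hoc
  · refine Or.inr (Or.inr (Or.inr ⟨hoa, hob, hec, ?_⟩))
    apply glue_even a b c hapos hbpos hcpos hsc hab hac hbc hoa hob hec
    · intro p pp hp2 hd
      exact hlega p pp hp2 hd
    · intro p pp hp2 hd
      exact hlegb p pp hp2 hd
    · intro p pp hp2 hd
      exact hlegc p pp hp2 hd
  · -- all odd
    left
    obtain ⟨A, rfl⟩ : ∃ A : ℕ, a = (A : ℤ) := ⟨a.toNat, (Int.toNat_of_nonneg hapos.le).symm⟩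
    obtain ⟨B, rfl⟩ : ∃ B : ℕ, b = (B : ℤ) := ⟨b.toNat, (Int.toNat_of_nonneg hbpos.le).symm⟩
    obtain ⟨C, rfl⟩ : ∃ C : ℕ, c = (C : ℤ) := ⟨c.toNat, (Int.toNat_of_nonneg hcpos.le).symm⟩
    have hA : A % 2 = 1 := Nat.odd_iff.mp (Int.odd_coe_nat A |>.mp hoa)
    have hB : B % 2 = 1 := Nat.odd_iff.mp (Int.odd_coe_nat B |>.mp hob)
    have hC : C % 2 = 1 := Nat.odd_iff.mp (Int.odd_coe_nat C |>.mp hoc)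
    have j1 : jacobiSym (-(B:ℤ)*C) A = 1 := by
      apply jac_one_of_primes _ _ hA
      intro p pp pd
      have hp2 : p ≠ 2 := by rintro rfl; omega
      exact hlega p pp hp2 (Int.natCast_dvd_natCast.mpr pd)
    have j2 : jacobiSym (-(A:ℤ)*C) B = 1 := by
      apply jac_one_of_primes _ _ hB
      intro p pp pd
      have hp2 : p ≠ 2 := by rintro rfl; omega
      exact hlegb p pp hp2 (Int.natCast_dvd_natCast.mpr pd)
    have j3 : jacobiSym (-(A:ℤ)*B) C = 1 := by
      apply jac_one_of_primes _ _ hC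
      intro p pp pd
      have hp2 : p ≠ 2 := by rintro rfl; omega
      exact hlegc p pp hp2 (Int.natCast_dvd_natCast.mpr pd)
    obtain ⟨m1, m2⟩ := key_odd A B C hA hB hC (Int.isCoprime_iff_gcd_eq_one.mp hab)
      (Int.isCoprime_iff_gcd_eq_one.mp hac) (Int.isCoprime_iff_gcd_eq_one.mp hbc) j1 j2 j3
    exact ⟨show (A:ℤ) % 4 = (B:ℤ) % 4 by omega, show (B:ℤ) % 4 = (C:ℤ) % 4 by omega⟩
end

section
/- Suppose a, b, c are all odd and a ≡ b ≡ c (mod 4). Then every integer N with N ≡ -abc (mod 8) is not represented over the rationals by the form ax² + by² + cz². -/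
def sq8 : Fin 3 → ZMod 8 := ![0, 1, 4]

set_option maxHeartbeats 1000000 in
lemma key8 : ∀ a b c : ZMod 8, (a = 1 ∨ a = 3 ∨ a = 5 ∨ a = 7) →
    (b = a ∨ b = a + 4) → (c = a ∨ c = a + 4) →
    ∀ i j k l : Fin 3,
    a * sq8 i + b * sq8 j + c * sq8 k = -(a*b*c) * sq8 l →
    sq8 i ≠ 1 ∧ sq8 j ≠ 1 ∧ sq8 k ≠ 1 ∧ sq8 l ≠ 1 := by decide

lemma sqres (x : ℤ) : ∃ i : Fin 3, ((x : ZMod 8))^2 = sq8 i ∧ (sq8 i = 1 ↔ Odd x) := by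
  have h8 : (x : ZMod 8) = ((x % 8 : ℤ) : ZMod 8) := by
    rw [ZMod.intCast_eq_intCast_iff]
    exact (Int.emod_emod_of_dvd x dvd_rfl).symm
  have hodd : Odd x ↔ x % 8 % 2 = 1 := by rw [Int.odd_iff]; omega
  have h : x % 8 = 0 ∨ x % 8 = 1 ∨ x % 8 = 2 ∨ x % 8 = 3 ∨ x % 8 = 4 ∨ x % 8 = 5 ∨
      x % 8 = 6 ∨ x % 8 = 7 := by omega
  rcases h with h|h|h|h|h|h|h|h <;> rw [h] at h8 hodd <;> rw [h8] <;>
    simp only [hodd] <;> decide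

lemma res_odd (a : ℤ) (hoa : Odd a) :
    (a : ZMod 8) = 1 ∨ (a : ZMod 8) = 3 ∨ (a : ZMod 8) = 5 ∨ (a : ZMod 8) = 7 := by
  have h8 : (a : ZMod 8) = ((a % 8 : ℤ) : ZMod 8) := by
    rw [ZMod.intCast_eq_intCast_iff]
    exact (Int.emod_emod_of_dvd a dvd_rfl).symm
  rw [Int.odd_iff] at hoa
  have h : a % 8 = 1 ∨ a % 8 = 3 ∨ a % 8 = 5 ∨ a % 8 = 7 := by omega
  rcases h with h|h|h|h <;> rw [h] at h8 <;> rw [h8] <;> decide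

lemma res_mod4 (a b : ℤ) (hab : a ≡ b [ZMOD 4]) :
    (b : ZMod 8) = (a : ZMod 8) ∨ (b : ZMod 8) = (a : ZMod 8) + 4 := by
  have h4 : (b - a) % 4 = 0 := by
    have := hab.dvd
    omega
  have h8 : (b - a) % 8 = 0 ∨ (b - a) % 8 = 4 := by omega
  have hc : ((b - a : ℤ) : ZMod 8) = (((b - a) % 8 : ℤ) : ZMod 8) := by
    rw [ZMod.intCast_eq_intCast_iff]
    exact (Int.emod_emod_of_dvd _ dvd_rfl).symm
  rcases h8 with h|h <;> rw [h] at hc <;> push_cast at hc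
  · left; linear_combination hc
  · right; linear_combination hc

lemma descent (a b c N : ℤ) (hoa : Odd a) (hob : Odd b) (hoc : Odd c)
    (hab4 : a ≡ b [ZMOD 4]) (hbc4 : b ≡ c [ZMOD 4]) (hN : N ≡ -(a * b * c) [ZMOD 8]) :
    ∀ n : ℕ, ∀ x y z t : ℤ, t.natAbs ≤ n → t ≠ 0 →
      a * x^2 + b * y^2 + c * z^2 = N * t^2 → False := by
  have hN8 : (N : ZMod 8) = -((a : ZMod 8) * b * c) := by
    have := (ZMod.intCast_eq_intCast_iff _ _ _).mpr hN
    push_cast at this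
    exact this
  have hac4 : a ≡ c [ZMOD 4] := hab4.trans hbc4
  intro n
  induction n with
  | zero => intro x y z t hle ht _; omega
  | succ n ih =>
    intro x y z t hle ht heq
    by_cases hall : Even x ∧ Even y ∧ Even z ∧ Even t
    · obtain ⟨⟨x', rfl⟩, ⟨y', rfl⟩, ⟨z', rfl⟩, ⟨t', rfl⟩⟩ := hall
      have h4 : 4 * (a * x'^2 + b * y'^2 + c * z'^2) = 4 * (N * t'^2) := by
        linear_combination heq
      exact ih x' y' z' t' (by omega) (by omega) (by linarith)
    · obtain ⟨i, hi, hio⟩ := sqres x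
      obtain ⟨j, hj, hjo⟩ := sqres y
      obtain ⟨k, hk, hko⟩ := sqres z
      obtain ⟨l, hl, hlo⟩ := sqres t
      have e8 : (a : ZMod 8) * (x : ZMod 8)^2 + (b : ZMod 8) * (y : ZMod 8)^2 +
          (c : ZMod 8) * (z : ZMod 8)^2 = (N : ZMod 8) * (t : ZMod 8)^2 := by
        have := congrArg (fun m : ℤ => (m : ZMod 8)) heq
        push_cast at this
        exact this
      rw [hN8, hi, hj, hk, hl] at e8
      have hkey := key8 (a : ZMod 8) (b : ZMod 8) (c : ZMod 8) (res_odd a hoa)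
        (res_mod4 a b hab4) (res_mod4 a c hac4) i j k l e8
      exact hall ⟨Int.not_odd_iff_even.mp (fun h => hkey.1 (hio.mpr h)),
        Int.not_odd_iff_even.mp (fun h => hkey.2.1 (hjo.mpr h)),
        Int.not_odd_iff_even.mp (fun h => hkey.2.2.1 (hko.mpr h)),
        Int.not_odd_iff_even.mp (fun h => hkey.2.2.2 (hlo.mpr h))⟩

theorem stmt2 (a b c : ℤ) (ha : a ≠ 0) (hb : b ≠ 0) (hc : c ≠ 0)
    (hsa : Squarefree a) (hsb : Squarefree b) (hsc : Squarefree c)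
    (hab : IsCoprime a b) (hac : IsCoprime a c) (hbc : IsCoprime b c)
    (hoa : Odd a) (hob : Odd b) (hoc : Odd c)
    (hab4 : a ≡ b [ZMOD 4]) (hbc4 : b ≡ c [ZMOD 4])
    (N : ℤ) (hN : N ≡ -(a * b * c) [ZMOD 8]) :
    ¬ ∃ x y z : ℚ, (a : ℚ) * x ^ 2 + (b : ℚ) * y ^ 2 + (c : ℚ) * z ^ 2 = (N : ℚ) := by
  rintro ⟨x, y, z, hxyz⟩
  set d : ℤ := (x.den : ℤ) * (y.den : ℤ) * (z.den : ℤ) with hd_def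
  have hd : d ≠ 0 := by
    simp [hd_def, x.den_nz, y.den_nz, z.den_nz]
  have hxden : (x.den : ℚ) ≠ 0 := by exact_mod_cast x.den_nz
  have hyden : (y.den : ℚ) ≠ 0 := by exact_mod_cast y.den_nz
  have hzden : (z.den : ℚ) ≠ 0 := by exact_mod_cast z.den_nz
  have hx : (x.num : ℚ) = x * x.den := by
    have h := Rat.num_div_den x
    rw [div_eq_iff hxden] at h
    exact h
  have hy : (y.num : ℚ) = y * y.den := by
    have h := Rat.num_div_den y
    rw [div_eq_iff hyden] at h
    exact h
  have hz : (z.num : ℚ) = z * z.den := by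
    have h := Rat.num_div_den z
    rw [div_eq_iff hzden] at h
    exact h
  have hq : (a : ℚ) * ((x.num * (y.den : ℤ) * (z.den : ℤ) : ℤ) : ℚ)^2 +
      (b : ℚ) * ((y.num * (x.den : ℤ) * (z.den : ℤ) : ℤ) : ℚ)^2 +
      (c : ℚ) * ((z.num * (x.den : ℤ) * (y.den : ℤ) : ℤ) : ℚ)^2 = (N : ℚ) * ((d : ℤ) : ℚ)^2 := by
    push_cast [hd_def]
    rw [hx, hy, hz]
    linear_combination ((x.den : ℚ) * (y.den : ℚ) * (z.den : ℚ))^2 * hxyz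
  have hZ : a * (x.num * (y.den : ℤ) * (z.den : ℤ))^2 +
      b * (y.num * (x.den : ℤ) * (z.den : ℤ))^2 +
      c * (z.num * (x.den : ℤ) * (y.den : ℤ))^2 = N * d^2 := by
    exact_mod_cast hq
  exact descent a b c N hoa hob hoc hab4 hbc4 hN d.natAbs _ _ _ d le_rfl hd hZ
end

section
/- Suppose a is even, b and c are odd, and b + c ≡ a (mod 8) or b + c ≡ 2a (mod 8). Then every integer N with N ≡ -abc (mod 16) is not represented over the rationals by the form ax² + by² + cz². -/
lemma sq16 (x : ℤ) : ∃ t r, x^2 = 16*t + r ∧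
    ((x % 2 = 0 ∧ (r = 0 ∨ r = 4)) ∨ (x % 2 = 1 ∧ (r = 1 ∨ r = 9))) := by
  obtain ⟨q, s, hqs, hs0, hs8⟩ : ∃ q s, x = 8*q + s ∧ 0 ≤ s ∧ s < 8 :=
    ⟨x/8, x%8, by omega, by omega, by omega⟩
  subst hqs
  interval_cases s
  · exact ⟨4*q^2, 0, by ring, by omega⟩
  · exact ⟨4*q^2+q, 1, by ring, by omega⟩
  · exact ⟨4*q^2+2*q, 4, by ring, by omega⟩
  · exact ⟨4*q^2+3*q, 9, by ring, by omega⟩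
  · exact ⟨4*q^2+4*q+1, 0, by ring, by omega⟩
  · exact ⟨4*q^2+5*q+1, 9, by ring, by omega⟩
  · exact ⟨4*q^2+6*q+2, 4, by ring, by omega⟩
  · exact ⟨4*q^2+7*q+3, 1, by ring, by omega⟩

set_option maxHeartbeats 1000000 in
lemma evens (a' b c N x y z w : ℤ) (ha' : a' % 2 = 1) (hb : b % 2 = 1) (hc : c % 2 = 1)
    (hbc : ((b + c) % 8 = (2*a') % 8 ∧ N % 16 = (2*a' - 4*c) % 16) ∨
           ((b + c) % 8 = (4*a') % 8 ∧ N % 16 = (2*a' - 8*c) % 16))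
    (heq : 2*a'*x^2 + b*y^2 + c*z^2 = N*w^2) :
    x % 2 = 0 ∧ y % 2 = 0 ∧ z % 2 = 0 ∧ w % 2 = 0 := by
  have hNe : N % 2 = 0 := by omega
  obtain ⟨t1, r1, hx, hr1⟩ := sq16 x
  obtain ⟨t2, r2, hy, hr2⟩ := sq16 y
  obtain ⟨t3, r3, hz, hr3⟩ := sq16 z
  obtain ⟨t4, r4, hw, hr4⟩ := sq16 w
  obtain ⟨M, hM⟩ : ∃ M, 2*a'*r1 + b*r2 + c*r3 - N*r4 = 16*M :=
    ⟨N*t4 - 2*a'*t1 - b*t2 - c*t3, by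
      linear_combination heq - 2*a'*hx - b*hy - c*hz + N*hw⟩
  clear hx hy hz hw heq
  have H1 : (x % 2 = 1 ∧ ∃ u, 2*a'*r1 = 2*a' + 16*u) ∨
            (x % 2 = 0 ∧ ∃ u, 2*a'*r1 = 8*u) := by
    rcases hr1 with ⟨h1, rfl | rfl⟩ | ⟨h1, rfl | rfl⟩
    · exact Or.inr ⟨h1, 0, by ring⟩
    · exact Or.inr ⟨h1, a', by ring⟩
    · exact Or.inl ⟨h1, 0, by ring⟩
    · exact Or.inl ⟨h1, a', by ring⟩
  have H2 : (y % 2 = 1 ∧ ∃ u, b*r2 = b + 8*u) ∨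
            (y % 2 = 0 ∧ (b*r2 = 0 ∨ b*r2 = 4*b)) := by
    rcases hr2 with ⟨h2, rfl | rfl⟩ | ⟨h2, rfl | rfl⟩
    · exact Or.inr ⟨h2, Or.inl (by ring)⟩
    · exact Or.inr ⟨h2, Or.inr (by ring)⟩
    · exact Or.inl ⟨h2, 0, by ring⟩
    · exact Or.inl ⟨h2, b, by ring⟩
  have H3 : (z % 2 = 1 ∧ ∃ u, c*r3 = c + 8*u) ∨
            (z % 2 = 0 ∧ (c*r3 = 0 ∨ c*r3 = 4*c)) := by
    rcases hr3 with ⟨h3, rfl | rfl⟩ | ⟨h3, rfl | rfl⟩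
    · exact Or.inr ⟨h3, Or.inl (by ring)⟩
    · exact Or.inr ⟨h3, Or.inr (by ring)⟩
    · exact Or.inl ⟨h3, 0, by ring⟩
    · exact Or.inl ⟨h3, c, by ring⟩
  have H4 : (w % 2 = 1 ∧ ∃ u, N*r4 = N + 16*u) ∨
            (w % 2 = 0 ∧ ∃ u, N*r4 = 8*u) := by
    rcases hr4 with ⟨h4, rfl | rfl⟩ | ⟨h4, rfl | rfl⟩
    · exact Or.inr ⟨h4, 0, by ring⟩
    · exact Or.inr ⟨h4, ⟨N/2, by omega⟩⟩
    · exact Or.inl ⟨h4, 0, by ring⟩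
    · exact Or.inl ⟨h4, ⟨N/2, by omega⟩⟩
  clear hr1 hr2 hr3 hr4
  rcases H1 with ⟨p1, u1, e1⟩ | ⟨p1, u1, e1⟩ <;>
    rcases H2 with ⟨p2, u2, e2⟩ | ⟨p2, e2 | e2⟩ <;>
      rcases H3 with ⟨p3, u3, e3⟩ | ⟨p3, e3 | e3⟩ <;>
        rcases H4 with ⟨p4, u4, e4⟩ | ⟨p4, u4, e4⟩ <;>
          rw [e1, e2, e3, e4] at hM <;> omega

lemma descent_s3 (a' b c N : ℤ) (ha' : a' % 2 = 1) (hb : b % 2 = 1) (hc : c % 2 = 1)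
    (hbc : ((b + c) % 8 = (2*a') % 8 ∧ N % 16 = (2*a' - 4*c) % 16) ∨
           ((b + c) % 8 = (4*a') % 8 ∧ N % 16 = (2*a' - 8*c) % 16)) :
    ∀ n : ℕ, ∀ w x y z : ℤ, w.natAbs = n → w ≠ 0 →
      2*a'*x^2 + b*y^2 + c*z^2 = N*w^2 → False := by
  intro n
  induction n using Nat.strong_induction_on with
  | _ n ih =>
    intro w x y z hn hw0 heq
    obtain ⟨px, py, pz, pw⟩ := evens a' b c N x y z w ha' hb hc hbc heq
    obtain ⟨x', rfl⟩ : ∃ x', x = 2*x' := ⟨x/2, by omega⟩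
    obtain ⟨y', rfl⟩ : ∃ y', y = 2*y' := ⟨y/2, by omega⟩
    obtain ⟨z', rfl⟩ : ∃ z', z = 2*z' := ⟨z/2, by omega⟩
    obtain ⟨w', rfl⟩ : ∃ w', w = 2*w' := ⟨w/2, by omega⟩
    refine ih w'.natAbs (by omega) w' x' y' z' rfl (by omega) ?_
    apply mul_left_cancel₀ (show (4:ℤ) ≠ 0 by norm_num)
    linear_combination heq

lemma int_sol (A B C NN : ℤ) (x y z : ℚ)
    (h : (A:ℚ)*x^2 + (B:ℚ)*y^2 + (C:ℚ)*z^2 = (NN:ℚ)) :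
    ∃ X Y Z W : ℤ, W ≠ 0 ∧ A*X^2 + B*Y^2 + C*Z^2 = NN*W^2 := by
  have hdx : ((x.den:ℚ)) ≠ 0 := by exact_mod_cast x.den_nz
  have hdy : ((y.den:ℚ)) ≠ 0 := by exact_mod_cast y.den_nz
  have hdz : ((z.den:ℚ)) ≠ 0 := by exact_mod_cast z.den_nz
  have hxn : (x.num:ℚ) = x * x.den := by
    have h' := div_mul_cancel₀ ((x.num:ℚ)) hdx
    rw [Rat.num_div_den] at h'
    exact h'.symm
  have hyn : (y.num:ℚ) = y * y.den := by
    have h' := div_mul_cancel₀ ((y.num:ℚ)) hdy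
    rw [Rat.num_div_den] at h'
    exact h'.symm
  have hzn : (z.num:ℚ) = z * z.den := by
    have h' := div_mul_cancel₀ ((z.num:ℚ)) hdz
    rw [Rat.num_div_den] at h'
    exact h'.symm
  refine ⟨x.num*(y.den*z.den), y.num*(x.den*z.den), z.num*(x.den*y.den),
    (x.den:ℤ)*y.den*z.den, ?_, ?_⟩
  · have d1 : 0 < (x.den:ℤ) := by exact_mod_cast x.pos
    have d2 : 0 < (y.den:ℤ) := by exact_mod_cast y.pos
    have d3 : 0 < (z.den:ℤ) := by exact_mod_cast z.pos
    positivity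
  · have key : ((A*(x.num*(y.den*z.den))^2 + B*(y.num*(x.den*z.den))^2
        + C*(z.num*(x.den*y.den))^2 : ℤ) : ℚ)
        = ((NN*((x.den:ℤ)*y.den*z.den)^2 : ℤ) : ℚ) := by
      push_cast
      linear_combination ((x.den:ℚ)*y.den*z.den)^2 * h
        + (A:ℚ)*((y.den:ℚ)*z.den)^2*((x.num:ℚ) + x*x.den)*hxn
        + (B:ℚ)*((x.den:ℚ)*z.den)^2*((y.num:ℚ) + y*y.den)*hyn
        + (C:ℚ)*((x.den:ℚ)*y.den)^2*((z.num:ℚ) + z*z.den)*hzn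
    exact_mod_cast key

theorem stmt3 (a b c : ℤ) (ha : a ≠ 0) (hb : b ≠ 0) (hc : c ≠ 0)
    (hsa : Squarefree a) (hsb : Squarefree b) (hsc : Squarefree c)
    (hab : IsCoprime a b) (hac : IsCoprime a c) (hbc : IsCoprime b c)
    (hea : Even a) (hob : Odd b) (hoc : Odd c)
    (hcong : b + c ≡ a [ZMOD 8] ∨ b + c ≡ 2 * a [ZMOD 8])
    (N : ℤ) (hN : N ≡ -(a * b * c) [ZMOD 16]) :
    ¬ ∃ x y z : ℚ, (a : ℚ) * x ^ 2 + (b : ℚ) * y ^ 2 + (c : ℚ) * z ^ 2 = (N : ℚ) := by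
  rintro ⟨x, y, z, hsol⟩
  -- a = 2 a' with a' odd
  have haE : a % 2 = 0 := Int.even_iff.mp hea
  obtain ⟨a', rfl⟩ : ∃ a', a = 2*a' := ⟨a/2, by omega⟩
  have h4 : ¬ ((4:ℤ) ∣ 2*a') := by
    intro h
    have h22 : (2*2:ℤ) ∣ 2*a' := by norm_num at h ⊢; exact h
    have := hsa 2 h22
    rw [Int.isUnit_iff] at this
    omega
  have ha' : a' % 2 = 1 := by omega
  have hbo : b % 2 = 1 := Int.odd_iff.mp hob
  have hco : c % 2 = 1 := Int.odd_iff.mp hoc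
  -- odd squares
  obtain ⟨v, hv⟩ : ∃ v, a'^2 = 8*v + 1 := by
    obtain ⟨s, hs⟩ : ∃ s, a' = 2*s+1 := ⟨a'/2, by omega⟩
    obtain ⟨e, he⟩ := Int.even_mul_succ_self s
    exact ⟨e, by rw [hs]; linear_combination 4*he⟩
  obtain ⟨m, hm⟩ : ∃ m, c^2 = 8*m + 1 := by
    obtain ⟨s, hs⟩ : ∃ s, c = 2*s+1 := ⟨c/2, by omega⟩
    obtain ⟨e, he⟩ := Int.even_mul_succ_self s
    exact ⟨e, by rw [hs]; linear_combination 4*he⟩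
  obtain ⟨j, hj⟩ : ∃ j, -(2*a'*b*c) - N = 16*j := by
    obtain ⟨j, hj⟩ := Int.ModEq.dvd hN
    exact ⟨j, by linarith [hj]⟩
  -- the combined congruence pair
  have HBC : ((b + c) % 8 = (2*a') % 8 ∧ N % 16 = (2*a' - 4*c) % 16) ∨
             ((b + c) % 8 = (4*a') % 8 ∧ N % 16 = (2*a' - 8*c) % 16) := by
    rcases hcong with h1 | h1
    · left
      have hmod : (b + c) % 8 = (2*a') % 8 := h1
      refine ⟨hmod, ?_⟩
      obtain ⟨k, hk⟩ : ∃ k, 2*a' - (b+c) = 8*k := Int.ModEq.dvd h1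
      have s1 : b*c = 2*a'*c - c^2 - 8*(k*c) := by linear_combination -c*hk
      have s2 : a'*(b*c) = 2*c + 16*(v*c) - a' - 8*(m*a') - 8*(a'*(k*c)) := by
        linear_combination a'*s1 + 2*c*hv - a'*hm
      obtain ⟨J, hJ⟩ : ∃ J, N - (2*a' - 4*c) = 16*J :=
        ⟨-(2*(v*c)) + (m*a') + (a'*(k*c)) - j, by linear_combination -hj - 2*s2⟩
      omega
    · right
      have hmod : (b + c) % 8 = (4*a') % 8 := by
        have : (b + c) % 8 = (2*(2*a')) % 8 := h1
        omega
      refine ⟨hmod, ?_⟩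
      obtain ⟨k, hk⟩ : ∃ k, 2*(2*a') - (b+c) = 8*k := Int.ModEq.dvd h1
      have s1 : b*c = 4*a'*c - c^2 - 8*(k*c) := by linear_combination -c*hk
      have s2 : a'*(b*c) = 4*c + 32*(v*c) - a' - 8*(m*a') - 8*(a'*(k*c)) := by
        linear_combination a'*s1 + 4*c*hv - a'*hm
      obtain ⟨J, hJ⟩ : ∃ J, N - (2*a' - 8*c) = 16*J :=
        ⟨-(4*(v*c)) + (m*a') + (a'*(k*c)) - j, by linear_combination -hj - 2*s2⟩
      omega
  -- integer solution
  obtain ⟨X, Y, Z, W, hW0, hint⟩ := int_sol (2*a') b c N x y z (by exact_mod_cast hsol)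
  exact descent_s3 a' b c N ha' hbo hco HBC W.natAbs W X Y Z rfl hW0
    (by linear_combination hint)
end

section
/- Suppose a, b, c are positive and all odd. Then every integer N with N ≡ -abc (mod 8(abc)²) is not represented over the rationals by the form ax² + by² + cz². -/
/-!
Clear denominators and take a solution of `a X² + b Y² + c Z² = N W²` with `gcd (X, Y, Z, W) = 1`.
For a prime `p ∣ a` we have `p² ∣ N + abc`, which forces `-bc` to be a square mod `p` (directly
if `p ∤ Z`; if `p ∣ Y, Z`, after dividing the equation by `p`), so `J(-bc | a) = 1`, and likewise
cyclically. Multiplying the three symbols and applying quadratic reciprocity gives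
`a ≡ b ≡ c (mod 4)`. But then `a X² + b Y² + c Z² + abc W² ≡ 0 (mod 8)` with one of `X, Y, Z, W`
odd is impossible.
-/

open NumberTheorySymbols

theorem exists_int_solution_of_rat {a b c N : ℤ}
    (h : ∃ x y z : ℚ, (a : ℚ) * x ^ 2 + (b : ℚ) * y ^ 2 + (c : ℚ) * z ^ 2 = (N : ℚ)) :
    ∃ X Y Z W : ℤ, W ≠ 0 ∧ a * X ^ 2 + b * Y ^ 2 + c * Z ^ 2 = N * W ^ 2 := by
  obtain ⟨x, y, z, h⟩ := h
  refine ⟨x.num * y.den * z.den, y.num * x.den * z.den, z.num * x.den * y.den,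
    x.den * y.den * z.den, by positivity, ?_⟩
  have hQ : ((a * (x.num * y.den * z.den) ^ 2 + b * (y.num * x.den * z.den) ^ 2
      + c * (z.num * x.den * y.den) ^ 2 : ℤ) : ℚ) =
      ((N * (x.den * y.den * z.den) ^ 2 : ℤ) : ℚ) := by
    push_cast
    rw [← x.mul_den_eq_num, ← y.mul_den_eq_num, ← z.mul_den_eq_num]
    linear_combination ((x.den : ℚ) * y.den * z.den) ^ 2 * h
  exact_mod_cast hQ

theorem exists_primitive_solution {a b c N : ℤ}
    (h : ∃ X Y Z W : ℤ, W ≠ 0 ∧ a * X ^ 2 + b * Y ^ 2 + c * Z ^ 2 = N * W ^ 2) :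
    ∃ X Y Z W : ℤ, W ≠ 0 ∧ a * X ^ 2 + b * Y ^ 2 + c * Z ^ 2 = N * W ^ 2 ∧
      ∀ d : ℤ, d ∣ X → d ∣ Y → d ∣ Z → d ∣ W → IsUnit d := by
  classical
  have hex : ∃ n : ℕ, 0 < n ∧ ∃ X Y Z : ℤ, a * X ^ 2 + b * Y ^ 2 + c * Z ^ 2 = N * n ^ 2 := by
    obtain ⟨X, Y, Z, W, hW, hE⟩ := h
    exact ⟨W.natAbs, Int.natAbs_pos.mpr hW, X, Y, Z, by rw [Int.natCast_natAbs, sq_abs, hE]⟩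
  -- a solution with least `W`
  obtain ⟨hn, X, Y, Z, hE⟩ := Nat.find_spec hex
  refine ⟨X, Y, Z, Nat.find hex, by exact_mod_cast hn.ne', hE, ?_⟩
  rintro d ⟨X', rfl⟩ ⟨Y', rfl⟩ ⟨Z', rfl⟩ ⟨W', hW'⟩
  by_contra hd
  rw [hW'] at hE
  have hn' : Nat.find hex = d.natAbs * W'.natAbs := by
    rw [← Int.natAbs_mul, ← hW', Int.natAbs_natCast]
  have hd0 : d ≠ 0 := by rintro rfl; simp at hn'
  have hW'0 : W' ≠ 0 := by rintro rfl; simp at hn'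
  have hE' : a * X' ^ 2 + b * Y' ^ 2 + c * Z' ^ 2 = N * (W'.natAbs : ℤ) ^ 2 := by
    rw [Int.natCast_natAbs, sq_abs]
    exact mul_left_cancel₀ (pow_ne_zero 2 hd0) (by linear_combination hE)
  have hlt : W'.natAbs < Nat.find hex := by
    have : d.natAbs ≠ 1 := fun h1 => hd (Int.isUnit_iff_natAbs_eq.mpr h1)
    have : 2 ≤ d.natAbs := by have := Int.natAbs_pos.mpr hd0; omega
    rw [hn']
    nlinarith [Int.natAbs_pos.mpr hW'0]
  exact Nat.find_min hex hlt ⟨Int.natAbs_pos.mpr hW'0, X', Y', Z', hE'⟩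

theorem isSquare_of_sq_eq_mul_sq {K : Type*} [Field K] {d x w : K} (hw : w ≠ 0)
    (h : x ^ 2 = d * w ^ 2) : IsSquare d :=
  ⟨x / w, by field_simp; linear_combination -h⟩

theorem sq_eq_neg_mul_mul_sq_of_dvd {a b c N X Y Z W : ℤ} {p : ℕ} [hp : Fact p.Prime]
    (hpa : ¬(p : ℤ) ∣ a) (hN : (p : ℤ) ∣ N + a * b * c) (hY : (p : ℤ) ∣ Y) (hZ : (p : ℤ) ∣ Z)
    (hE : p * a * X ^ 2 + b * Y ^ 2 + c * Z ^ 2 = p * N * W ^ 2) :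
    (X : ZMod p) ^ 2 = -(b * c) * (W : ZMod p) ^ 2 := by
  obtain ⟨Y₁, rfl⟩ := hY
  obtain ⟨Z₁, rfl⟩ := hZ
  have hE₁ : a * X ^ 2 + p * (b * Y₁ ^ 2 + c * Z₁ ^ 2) = N * W ^ 2 :=
    mul_left_cancel₀ (Int.natCast_ne_zero.mpr hp.out.ne_zero) (by linear_combination hE)
  have hEp := congrArg (Int.cast : ℤ → ZMod p) hE₁
  have hNp := (ZMod.intCast_zmod_eq_zero_iff_dvd _ p).mpr hN
  push_cast at hEp hNp
  rw [ZMod.natCast_self] at hEp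
  rw [← ZMod.intCast_zmod_eq_zero_iff_dvd] at hpa
  exact mul_left_cancel₀ hpa (by linear_combination hEp + (W : ZMod p) ^ 2 * hNp)

theorem isSquare_neg_mul_of_prime_dvd {a b c N X Y Z W : ℤ} {p : ℕ} [hp : Fact p.Prime]
    (hsa : Squarefree a) (hpa : (p : ℤ) ∣ a) (hpb : ¬(p : ℤ) ∣ b)
    (hN : (p : ℤ) ^ 2 ∣ N + a * b * c) (hE : a * X ^ 2 + b * Y ^ 2 + c * Z ^ 2 = N * W ^ 2)
    (hprim : ¬((p : ℤ) ∣ X ∧ (p : ℤ) ∣ Y ∧ (p : ℤ) ∣ Z ∧ (p : ℤ) ∣ W)) :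
    IsSquare ((-(b * c) : ℤ) : ZMod p) := by
  obtain ⟨a₁, rfl⟩ := hpa
  obtain ⟨N₁, rfl⟩ : (p : ℤ) ∣ N :=
    (dvd_add_left (dvd_mul_of_dvd_left (dvd_mul_of_dvd_left (dvd_mul_right _ _) _) _)).mp
      ((dvd_pow_self _ two_ne_zero).trans hN)
  have hEp := congrArg (Int.cast : ℤ → ZMod p) hE
  push_cast at hEp ⊢
  rw [ZMod.natCast_self] at hEp
  rw [← ZMod.intCast_zmod_eq_zero_iff_dvd] at hpb
  by_cases hZ : (Z : ZMod p) = 0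
  · have hY : (Y : ZMod p) = 0 := by
      rw [hZ] at hEp
      simpa [hpb] using hEp
    rw [ZMod.intCast_zmod_eq_zero_iff_dvd] at hY hZ
    have ha₁ : ¬(p : ℤ) ∣ a₁ := fun h =>
      (Nat.prime_iff_prime_int.mp hp.out).not_isUnit (hsa _ (mul_dvd_mul_left _ h))
    have hN₁ : (p : ℤ) ∣ N₁ + a₁ * b * c :=
      (mul_dvd_mul_iff_left (Int.natCast_ne_zero.mpr hp.out.ne_zero)).mp
        (by rw [← sq, mul_add, ← mul_assoc, ← mul_assoc]; exact hN)
    have hXW := sq_eq_neg_mul_mul_sq_of_dvd ha₁ hN₁ hY hZ hE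
    refine isSquare_of_sq_eq_mul_sq (fun hW => hprim ⟨?_, hY, hZ, ?_⟩) hXW
    · rw [← ZMod.intCast_zmod_eq_zero_iff_dvd]
      simpa [hW] using hXW
    · rwa [← ZMod.intCast_zmod_eq_zero_iff_dvd]
  · exact isSquare_of_sq_eq_mul_sq (x := b * Y) hZ (by linear_combination b * hEp)

theorem jacobiSym_eq_one_of_isSquare {m : ℤ} {n : ℕ} (hmn : IsCoprime m n)
    (h : ∀ p : ℕ, p.Prime → p ∣ n → IsSquare (m : ZMod p)) : J(m | n) = 1 := by
  rw [jacobiSym]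
  refine List.prod_eq_one fun x hx => ?_
  obtain ⟨p, hp, rfl⟩ := List.mem_pmap.mp hx
  have hpn := Nat.dvd_of_mem_primeFactorsList hp
  have hpp := Nat.prime_of_mem_primeFactorsList hp
  have : Fact p.Prime := ⟨hpp⟩
  refine (legendreSym.eq_one_iff p fun hm => ?_).mpr (h p hpp hpn)
  rw [ZMod.intCast_zmod_eq_zero_iff_dvd] at hm
  exact (Nat.prime_iff_prime_int.mp hpp).not_isUnit
    (hmn.isUnit_of_dvd' hm (Int.natCast_dvd_natCast.mpr hpn))

theorem jacobiSym_neg_mul_eq_one_of_solution {a : ℕ} {b c N X Y Z W : ℤ}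
    (hsa : Squarefree (a : ℤ)) (hab : IsCoprime (a : ℤ) b) (hac : IsCoprime (a : ℤ) c)
    (hN : (a : ℤ) ^ 2 ∣ N + a * b * c) (hE : a * X ^ 2 + b * Y ^ 2 + c * Z ^ 2 = N * W ^ 2)
    (hprim : ∀ d : ℤ, d ∣ X → d ∣ Y → d ∣ Z → d ∣ W → IsUnit d) :
    J(-(b * c) | a) = 1 := by
  refine jacobiSym_eq_one_of_isSquare (hab.mul_right hac).symm.neg_left fun p hp hpa => ?_
  have : Fact p.Prime := ⟨hp⟩
  have hpa' : (p : ℤ) ∣ a := Int.natCast_dvd_natCast.mpr hpa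
  have hpu := (Nat.prime_iff_prime_int.mp hp).not_isUnit
  exact isSquare_neg_mul_of_prime_dvd hsa hpa' (fun hpb => hpu (hab.isUnit_of_dvd' hpa' hpb))
    ((pow_dvd_pow_of_dvd hpa' 2).trans hN) hE
    (fun ⟨hX, hY, hZ, hW⟩ => hpu (hprim _ hX hY hZ hW))

theorem jacobiSym_neg_mul_mul_cyclic {A B C : ℕ} (hA : Odd A) (hB : Odd B) (hC : Odd C)
    (hAB : A.Coprime B) (hAC : A.Coprime C) (hBC : B.Coprime C) :
    J(-(B * C) | A) * J(-(A * C) | B) * J(-(A * B) | C) =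
      (-1) ^ (A / 2 + B / 2 + C / 2 + A / 2 * (B / 2) + A / 2 * (C / 2) + B / 2 * (C / 2)) := by
  have hu := jacobiSym.sq_one (a := B) (b := A) (by simpa [Nat.coprime_comm] using hAB)
  have hv := jacobiSym.sq_one (a := C) (b := A) (by simpa [Nat.coprime_comm] using hAC)
  have hs := jacobiSym.sq_one (a := C) (b := B) (by simpa [Nat.coprime_comm] using hBC)
  simp only [jacobiSym.neg _ hA, jacobiSym.neg _ hB, jacobiSym.neg _ hC, jacobiSym.mul_left,
    ZMod.χ₄_eq_neg_one_pow (Nat.odd_iff.mp hA), ZMod.χ₄_eq_neg_one_pow (Nat.odd_iff.mp hB),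
    ZMod.χ₄_eq_neg_one_pow (Nat.odd_iff.mp hC), jacobiSym.quadratic_reciprocity hA hB,
    jacobiSym.quadratic_reciprocity hA hC, jacobiSym.quadratic_reciprocity hB hC, pow_add]
  ring_nf
  rw [hu, hv, hs]
  ring

theorem mod_four_eq_of_jacobiSym_neg_mul_eq_one {A B C : ℕ} (hA : Odd A) (hB : Odd B)
    (hC : Odd C) (hAB : A.Coprime B) (hAC : A.Coprime C) (hBC : B.Coprime C)
    (hJA : J(-(B * C) | A) = 1) (hJB : J(-(A * C) | B) = 1) (hJC : J(-(A * B) | C) = 1) :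
    A % 4 = B % 4 ∧ A % 4 = C % 4 := by
  have h := jacobiSym_neg_mul_mul_cyclic hA hB hC hAB hAC hBC
  rw [hJA, hJB, hJC, one_mul, one_mul, eq_comm, neg_one_pow_eq_one_iff_even (by decide),
    ← ZMod.natCast_eq_zero_iff_even] at h
  push_cast at h
  have parity : ∀ x y z : ZMod 2, x + y + z + x * y + x * z + y * z = 0 → x = y ∧ x = z := by
    decide
  obtain ⟨hAB2, hAC2⟩ := parity _ _ _ h
  rw [ZMod.natCast_eq_natCast_iff'] at hAB2 hAC2
  have := Nat.odd_iff.mp hA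
  have := Nat.odd_iff.mp hB
  have := Nat.odd_iff.mp hC
  omega

theorem zmod8_diagonal_ne_zero : ∀ a ∈ ({1, 3, 5, 7} : Finset (ZMod 8)),
    ∀ b ∈ ({a, a + 4} : Finset (ZMod 8)), ∀ c ∈ ({a, a + 4} : Finset (ZMod 8)),
    ∀ u ∈ ({0, 1, 4} : Finset (ZMod 8)), ∀ v ∈ ({0, 1, 4} : Finset (ZMod 8)),
    ∀ w ∈ ({0, 1, 4} : Finset (ZMod 8)), ∀ t ∈ ({0, 1, 4} : Finset (ZMod 8)),
    (u = 1 ∨ v = 1 ∨ w = 1 ∨ t = 1) → a * u + b * v + c * w + a * b * c * t ≠ 0 := by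
  decide

theorem eight_not_dvd_add_mul_sq {a b c X Y Z W : ℤ} (ha : Odd a) (hb : 4 ∣ b - a)
    (hc : 4 ∣ c - a) (hprim : ¬(2 ∣ X ∧ 2 ∣ Y ∧ 2 ∣ Z ∧ 2 ∣ W)) :
    ¬8 ∣ a * X ^ 2 + b * Y ^ 2 + c * Z ^ 2 + a * b * c * W ^ 2 := by
  have hsq (x : ℤ) : (x : ZMod 8) ^ 2 ∈ ({0, 1, 4} : Finset (ZMod 8)) := by
    generalize (x : ZMod 8) = y
    revert y
    decide
  have heven (x : ℤ) (hx : (x : ZMod 8) ^ 2 ≠ 1) : 2 ∣ x := by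
    rcases Int.even_or_odd x with hx2 | ⟨k, rfl⟩
    · exact hx2.two_dvd
    · refine absurd ?_ hx
      push_cast
      generalize (k : ZMod 8) = l
      revert l
      decide
  have ha8 : (a : ZMod 8) ∈ ({1, 3, 5, 7} : Finset (ZMod 8)) := by
    obtain ⟨k, rfl⟩ := ha
    push_cast
    generalize (k : ZMod 8) = l
    revert l
    decide
  have hshift {d : ℤ} (hd : 4 ∣ d - a) :
      (d : ZMod 8) ∈ ({(a : ZMod 8), (a : ZMod 8) + 4} : Finset (ZMod 8)) := by
    obtain ⟨m, hm⟩ := hd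
    rw [show d = a + 4 * m by linarith]
    push_cast
    generalize (a : ZMod 8) = a'
    generalize (m : ZMod 8) = m'
    revert a' m'
    decide
  have hone : (X : ZMod 8) ^ 2 = 1 ∨ (Y : ZMod 8) ^ 2 = 1 ∨ (Z : ZMod 8) ^ 2 = 1 ∨
      (W : ZMod 8) ^ 2 = 1 := by
    by_contra! h
    exact hprim ⟨heven X h.1, heven Y h.2.1, heven Z h.2.2.1, heven W h.2.2.2⟩
  intro h8
  have := (ZMod.intCast_zmod_eq_zero_iff_dvd _ 8).mpr (by exact_mod_cast h8)
  push_cast at this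
  exact zmod8_diagonal_ne_zero _ ha8 _ (hshift hb) _ (hshift hc)
    _ (hsq X) _ (hsq Y) _ (hsq Z) _ (hsq W) hone this

theorem stmt4_general (a b c : ℤ)
    (hsa : Squarefree a) (hsb : Squarefree b) (hsc : Squarefree c)
    (hab : IsCoprime a b) (hac : IsCoprime a c) (hbc : IsCoprime b c)
    (hapos : 0 < a) (hbpos : 0 < b) (hcpos : 0 < c)
    (hoa : Odd a) (hob : Odd b) (hoc : Odd c)
    (N : ℤ) (hN : N ≡ -(a * b * c) [ZMOD 8 * (a * b * c) ^ 2]) :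
    ¬ ∃ x y z : ℚ, (a : ℚ) * x ^ 2 + (b : ℚ) * y ^ 2 + (c : ℚ) * z ^ 2 = (N : ℚ) := by
  intro hrat
  obtain ⟨X, Y, Z, W, -, hE, hprim⟩ := exists_primitive_solution (exists_int_solution_of_rat hrat)
  have hdvd : 8 * (a * b * c) ^ 2 ∣ N + a * b * c := by
    simpa only [sub_neg_eq_add] using hN.symm.dvd
  have hsq (d e f : ℤ) (h : d * e * f = a * b * c) : d ^ 2 ∣ N + d * e * f := by
    rw [h]
    exact (pow_dvd_pow_of_dvd (Dvd.intro (e * f) (by rw [← h, mul_assoc])) 2).trans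
      (dvd_of_mul_left_dvd hdvd)
  lift a to ℕ using hapos.le
  lift b to ℕ using hbpos.le
  lift c to ℕ using hcpos.le
  have hJa := jacobiSym_neg_mul_eq_one_of_solution hsa hab hac (hsq _ _ _ rfl) hE hprim
  have hJb := jacobiSym_neg_mul_eq_one_of_solution hsb hab.symm hbc (hsq _ _ _ (by ring))
    (by linear_combination hE) fun d hY hX hZ hW => hprim d hX hY hZ hW
  have hJc := jacobiSym_neg_mul_eq_one_of_solution hsc hac.symm hbc.symm (hsq _ _ _ (by ring))
    (by linear_combination hE) fun d hZ hX hY hW => hprim d hX hY hZ hW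
  obtain ⟨hab4, hac4⟩ := mod_four_eq_of_jacobiSym_neg_mul_eq_one ((Int.odd_coe_nat _).mp hoa)
    ((Int.odd_coe_nat _).mp hob) ((Int.odd_coe_nat _).mp hoc) (Nat.isCoprime_iff_coprime.mp hab)
    (Nat.isCoprime_iff_coprime.mp hac) (Nat.isCoprime_iff_coprime.mp hbc) hJa hJb hJc
  refine eight_not_dvd_add_mul_sq (b := b) (c := c) hoa (by omega) (by omega)
    (fun ⟨hX, hY, hZ, hW⟩ => (by decide : ¬IsUnit (2 : ℤ)) (hprim 2 hX hY hZ hW)) ?_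
  rw [show (a * X ^ 2 + b * Y ^ 2 + c * Z ^ 2 + a * b * c * W ^ 2 : ℤ) = (N + a * b * c) * W ^ 2 by
    linear_combination hE]
  exact ((dvd_mul_right _ _).trans hdvd).mul_right _

theorem stmt4 (a b c : ℤ) (ha : a ≠ 0) (hb : b ≠ 0) (hc : c ≠ 0)
    (hsa : Squarefree a) (hsb : Squarefree b) (hsc : Squarefree c)
    (hab : IsCoprime a b) (hac : IsCoprime a c) (hbc : IsCoprime b c)
    (hapos : 0 < a) (hbpos : 0 < b) (hcpos : 0 < c)
    (hoa : Odd a) (hob : Odd b) (hoc : Odd c)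
    (N : ℤ) (hN : N ≡ -(a * b * c) [ZMOD 8 * (a * b * c) ^ 2]) :
    ¬ ∃ x y z : ℚ, (a : ℚ) * x ^ 2 + (b : ℚ) * y ^ 2 + (c : ℚ) * z ^ 2 = (N : ℚ) :=
  stmt4_general a b c hsa hsb hsc hab hac hbc hapos hbpos hcpos hoa hob hoc N hN
end

section
/- Suppose a, b, c are all odd and it is NOT the case that a ≡ b ≡ c (mod 4). Then every residue class modulo 8 is represented modulo 8 by the form ax² + by² + cz²; that is, for every integer n there exist integers x, y, z with ax² + by² + cz² ≡ n (mod 8). -/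
set_option maxHeartbeats 1000000 in
set_option synthInstance.maxHeartbeats 1000000 in
set_option synthInstance.maxSize 2000 in
lemma key6 : ∀ A B C N : ZMod 8, (∃ k : ZMod 8, A = 2*k+1) → (∃ k : ZMod 8, B = 2*k+1) → (∃ k : ZMod 8, C = 2*k+1) →
    ¬((∃ k : ZMod 8, B = A + 4*k) ∧ (∃ k : ZMod 8, C = B + 4*k)) →
    ∃ x y z : ZMod 8, A * x ^ 2 + B * y ^ 2 + C * z ^ 2 = N := by decide

lemma mod4_of_zmod8 (a b : ℤ) (h : ∃ k : ZMod 8, (b : ZMod 8) = (a : ZMod 8) + 4*k) :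
    a ≡ b [ZMOD 4] := by
  obtain ⟨k, hk⟩ := h
  obtain ⟨k', rfl⟩ := ZMod.intCast_surjective (n := 8) k
  have h8 : ((b - a - 4*k' : ℤ) : ZMod 8) = 0 := by push_cast; rw [hk]; ring
  have hdvd : (8 : ℤ) ∣ (b - a - 4*k') := by
    exact_mod_cast (ZMod.intCast_zmod_eq_zero_iff_dvd _ 8).mp h8
  have h4 : (4 : ℤ) ∣ (b - a) := by
    obtain ⟨t, ht⟩ := hdvd
    exact ⟨2*t + k', by linarith⟩
  exact (Int.modEq_iff_dvd).mpr h4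

theorem stmt6 (a b c : ℤ) (ha : a ≠ 0) (hb : b ≠ 0) (hc : c ≠ 0)
    (hsa : Squarefree a) (hsb : Squarefree b) (hsc : Squarefree c)
    (hab : IsCoprime a b) (hac : IsCoprime a c) (hbc : IsCoprime b c)
    (hoa : Odd a) (hob : Odd b) (hoc : Odd c)
    (hne : ¬ (a ≡ b [ZMOD 4] ∧ b ≡ c [ZMOD 4])) :
    ∀ n : ℤ, ∃ x y z : ℤ, a * x ^ 2 + b * y ^ 2 + c * z ^ 2 ≡ n [ZMOD 8] := by
  intro n
  obtain ⟨ka, hka⟩ := hoa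
  obtain ⟨kb, hkb⟩ := hob
  obtain ⟨kc, hkc⟩ := hoc
  have h1 : ∃ k : ZMod 8, (a : ZMod 8) = 2*k+1 := ⟨(ka : ZMod 8), by rw [hka]; push_cast; ring⟩
  have h2 : ∃ k : ZMod 8, (b : ZMod 8) = 2*k+1 := ⟨(kb : ZMod 8), by rw [hkb]; push_cast; ring⟩
  have h3 : ∃ k : ZMod 8, (c : ZMod 8) = 2*k+1 := ⟨(kc : ZMod 8), by rw [hkc]; push_cast; ring⟩
  have h4 : ¬((∃ k : ZMod 8, (b : ZMod 8) = (a : ZMod 8) + 4*k) ∧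
      (∃ k : ZMod 8, (c : ZMod 8) = (b : ZMod 8) + 4*k)) := by
    rintro ⟨hx, hy⟩
    exact hne ⟨mod4_of_zmod8 a b hx, mod4_of_zmod8 b c hy⟩
  obtain ⟨X, Y, Z, hXYZ⟩ := key6 (a : ZMod 8) (b : ZMod 8) (c : ZMod 8) (n : ZMod 8) h1 h2 h3 h4
  obtain ⟨x, rfl⟩ := ZMod.intCast_surjective (n := 8) X
  obtain ⟨y, rfl⟩ := ZMod.intCast_surjective (n := 8) Y
  obtain ⟨z, rfl⟩ := ZMod.intCast_surjective (n := 8) Z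
  refine ⟨x, y, z, ?_⟩
  have : ((a * x ^ 2 + b * y ^ 2 + c * z ^ 2 : ℤ) : ZMod 8) = ((n : ℤ) : ZMod 8) := by
    push_cast
    rw [← hXYZ]
  exact (ZMod.intCast_eq_intCast_iff _ _ _).mp this
end

section
/- Suppose a, b, c are all odd and a ≡ b ≡ c (mod 4). Then an integer n is represented modulo 8 by the form ax² + by² + cz² if and only if n ≢ -abc (mod 8). -/
set_option maxHeartbeats 2000000 in
private lemma key8_s7 : ∀ a b c n : ZMod 8,
    (a=1∨a=3∨a=5∨a=7) → (b=1∨b=3∨b=5∨b=7) → (c=1∨c=3∨c=5∨c=7) →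
    (a-b=0∨a-b=4) → (b-c=0∨b-c=4) →
    ((∃ x y z : ZMod 8, a*x^2+b*y^2+c*z^2 = n) ↔ n ≠ -(a*b*c)) := by decide

private lemma odd_cast8 {a : ℤ} (h : Odd a) :
    ((a:ZMod 8)=1∨(a:ZMod 8)=3∨(a:ZMod 8)=5∨(a:ZMod 8)=7) := by
  obtain ⟨k, hk⟩ := h
  have : (a : ZMod 8) = 2*(k:ZMod 8)+1 := by push_cast [hk]; ring
  have h2 : ∀ m : ZMod 8, (2*m+1=1∨2*m+1=3∨2*m+1=5∨2*m+1=7) := by decide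
  rw [this]; exact h2 _

private lemma mod4_cast8 {a b : ℤ} (h : a ≡ b [ZMOD 4]) :
    ((a:ZMod 8)-(b:ZMod 8)=0∨(a:ZMod 8)-(b:ZMod 8)=4) := by
  obtain ⟨m, hm⟩ := h.dvd
  have : (a:ZMod 8)-(b:ZMod 8) = 4*(-(m:ZMod 8)) := by
    have : a - b = 4*(-m) := by linarith
    calc (a:ZMod 8)-(b:ZMod 8) = ((a-b : ℤ) : ZMod 8) := by push_cast; ring
    _ = 4*(-(m:ZMod 8)) := by rw [this]; push_cast; ring
  have h2 : ∀ u : ZMod 8, (4*u=0∨4*u=4) := by decide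
  rw [this]; exact h2 _

theorem stmt7 (a b c : ℤ) (ha : a ≠ 0) (hb : b ≠ 0) (hc : c ≠ 0)
    (hsa : Squarefree a) (hsb : Squarefree b) (hsc : Squarefree c)
    (hab : IsCoprime a b) (hac : IsCoprime a c) (hbc : IsCoprime b c)
    (hoa : Odd a) (hob : Odd b) (hoc : Odd c)
    (hab4 : a ≡ b [ZMOD 4]) (hbc4 : b ≡ c [ZMOD 4]) :
    ∀ n : ℤ, (∃ x y z : ℤ, a * x ^ 2 + b * y ^ 2 + c * z ^ 2 ≡ n [ZMOD 8]) ↔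
      ¬ n ≡ -(a * b * c) [ZMOD 8] := by
  intro n
  have key := key8_s7 (a:ZMod 8) (b:ZMod 8) (c:ZMod 8) (n:ZMod 8)
    (odd_cast8 hoa) (odd_cast8 hob) (odd_cast8 hoc) (mod4_cast8 hab4) (mod4_cast8 hbc4)
  constructor
  · rintro ⟨x, y, z, hxyz⟩ hn
    have h1 : ((a * x ^ 2 + b * y ^ 2 + c * z ^ 2 : ℤ) : ZMod 8) = (n : ZMod 8) := by
      exact_mod_cast (ZMod.intCast_eq_intCast_iff _ _ _).mpr hxyz
    have h2 : (n : ZMod 8) = ((-(a*b*c) : ℤ) : ZMod 8) := by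
      exact_mod_cast (ZMod.intCast_eq_intCast_iff _ _ _).mpr hn
    apply key.mp ⟨(x:ZMod 8), (y:ZMod 8), (z:ZMod 8), by push_cast at h1 ⊢; exact h1⟩
    rw [h2]; push_cast; ring
  · intro hn
    have hn' : (n : ZMod 8) ≠ -((a:ZMod 8)*(b:ZMod 8)*(c:ZMod 8)) := by
      intro h
      apply hn
      apply (ZMod.intCast_eq_intCast_iff _ _ 8).mp
      push_cast
      exact h
    obtain ⟨x, y, z, hxyz⟩ := key.mpr hn'
    obtain ⟨x', hx⟩ := ZMod.intCast_surjective (n := 8) x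
    obtain ⟨y', hy⟩ := ZMod.intCast_surjective (n := 8) y
    obtain ⟨z', hz⟩ := ZMod.intCast_surjective (n := 8) z
    refine ⟨x', y', z', ?_⟩
    apply (ZMod.intCast_eq_intCast_iff _ _ 8).mp
    push_cast
    rw [hx, hy, hz]
    exact hxyz
end

section
/- Suppose a is even and b, c are odd. If b + c ≢ a (mod 8) and b + c ≢ 2a (mod 8), then every residue class modulo 16 is represented modulo 16 by the form ax² + by² + cz². If b + c ≡ a (mod 8) or b + c ≡ 2a (mod 8), then an integer n is represented modulo 16 by the form if and only if n ≢ -abc (mod 16). -/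
lemma dvd16iff (t : ℤ) : ((t : ZMod 16) = 0) ↔ (16:ℤ) ∣ t := by
  simpa using ZMod.intCast_zmod_eq_zero_iff_dvd t 16

lemma m8iff (x y : ℤ) : x ≡ y [ZMOD 8] ↔
    ((x : ZMod 16) - (y : ZMod 16) = 0 ∨ (x : ZMod 16) - (y : ZMod 16) = 8) := by
  rw [Int.modEq_iff_dvd]
  have h0 : ((x : ZMod 16) - (y : ZMod 16) = 0) ↔ (16:ℤ) ∣ (x - y) := by
    rw [← dvd16iff]; push_cast; constructor <;> intro h <;> linear_combination h
  have h8 : ((x : ZMod 16) - (y : ZMod 16) = 8) ↔ (16:ℤ) ∣ (x - y - 8) := by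
    rw [← dvd16iff]; push_cast
    constructor <;> intro h <;> linear_combination h
  rw [h0, h8]
  omega

lemma sq_mem16 : ∀ x : ZMod 16, x ^ 2 ∈ ({0,1,4,9} : Finset (ZMod 16)) := by decide

lemma mem_sq16 : ∀ s ∈ ({0,1,4,9} : Finset (ZMod 16)), ∃ x : ZMod 16, x ^ 2 = s := by decide

set_option synthInstance.maxSize 2000 in
set_option synthInstance.maxHeartbeats 1000000 in
set_option maxHeartbeats 2000000 in
lemma key16 : ∀ A B C : ZMod 16,
    A ∈ ({2,6,10,14} : Finset (ZMod 16)) →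
    B ∈ ({1,3,5,7,9,11,13,15} : Finset (ZMod 16)) →
    C ∈ ({1,3,5,7,9,11,13,15} : Finset (ZMod 16)) →
    ((¬(B + C - A = 0 ∨ B + C - A = 8) ∧ ¬(B + C - 2*A = 0 ∨ B + C - 2*A = 8)) →
      ∀ N : ZMod 16, ∃ p ∈ ({0,1,4,9} : Finset (ZMod 16)),
        ∃ q ∈ ({0,1,4,9} : Finset (ZMod 16)), ∃ r ∈ ({0,1,4,9} : Finset (ZMod 16)),
          A*p + B*q + C*r = N) ∧
    (((B + C - A = 0 ∨ B + C - A = 8) ∨ (B + C - 2*A = 0 ∨ B + C - 2*A = 8)) →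
      ∀ N : ZMod 16, (∃ p ∈ ({0,1,4,9} : Finset (ZMod 16)),
        ∃ q ∈ ({0,1,4,9} : Finset (ZMod 16)), ∃ r ∈ ({0,1,4,9} : Finset (ZMod 16)),
          A*p + B*q + C*r = N) ↔ N ≠ -(A*B*C)) := by decide

lemma repr_iff (a b c n : ℤ) :
    (∃ x y z : ℤ, a * x ^ 2 + b * y ^ 2 + c * z ^ 2 ≡ n [ZMOD 16]) ↔
    (∃ p ∈ ({0,1,4,9} : Finset (ZMod 16)), ∃ q ∈ ({0,1,4,9} : Finset (ZMod 16)),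
      ∃ r ∈ ({0,1,4,9} : Finset (ZMod 16)),
        (a : ZMod 16)*p + (b : ZMod 16)*q + (c : ZMod 16)*r = (n : ZMod 16)) := by
  constructor
  · rintro ⟨x, y, z, h⟩
    have h' := (ZMod.intCast_eq_intCast_iff _ _ 16).2 (by exact_mod_cast h)
    push_cast at h'
    exact ⟨_, sq_mem16 x, _, sq_mem16 y, _, sq_mem16 z, by linear_combination h'⟩
  · rintro ⟨p, hp, q, hq, r, hr, h⟩
    obtain ⟨X, hX⟩ := mem_sq16 p hp
    obtain ⟨Y, hY⟩ := mem_sq16 q hq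
    obtain ⟨Z, hZ⟩ := mem_sq16 r hr
    obtain ⟨x, rfl⟩ := ZMod.intCast_surjective X
    obtain ⟨y, rfl⟩ := ZMod.intCast_surjective Y
    obtain ⟨z, rfl⟩ := ZMod.intCast_surjective Z
    refine ⟨x, y, z, ?_⟩
    have : ((a * x ^ 2 + b * y ^ 2 + c * z ^ 2 : ℤ) : ZMod 16) = ((n : ℤ) : ZMod 16) := by
      push_cast
      rw [hX, hY, hZ, h]
    exact (ZMod.intCast_eq_intCast_iff _ _ 16).1 this

lemma castmod16 (t : ℤ) : ((t : ZMod 16) = ((t % 16 : ℤ) : ZMod 16)) := by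
  refine (ZMod.intCast_eq_intCast_iff _ _ 16).2 ?_
  have : ((16:ℕ):ℤ) = 16 := by norm_num
  rw [Int.ModEq, this]
  omega

lemma memA16 (a : ℤ) (h2 : (2:ℤ) ∣ a) (h4 : ¬ (4:ℤ) ∣ a) :
    (a : ZMod 16) ∈ ({2,6,10,14} : Finset (ZMod 16)) := by
  have h4' : a % 4 ≠ 0 := fun h => h4 (Int.dvd_of_emod_eq_zero h)
  have hm : a % 16 = 2 ∨ a % 16 = 6 ∨ a % 16 = 10 ∨ a % 16 = 14 := by omega
  rw [castmod16 a]
  rcases hm with h | h | h | h <;> rw [h] <;> decide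

lemma memO16 (t : ℤ) (h : Odd t) :
    (t : ZMod 16) ∈ ({1,3,5,7,9,11,13,15} : Finset (ZMod 16)) := by
  obtain ⟨k, hk⟩ := h
  have hm : t % 16 = 1 ∨ t % 16 = 3 ∨ t % 16 = 5 ∨ t % 16 = 7 ∨ t % 16 = 9 ∨
      t % 16 = 11 ∨ t % 16 = 13 ∨ t % 16 = 15 := by omega
  rw [castmod16 t]
  rcases hm with h|h|h|h|h|h|h|h <;> rw [h] <;> decide

lemma modeq16_iff (a b c n : ℤ) : (n ≡ -(a * b * c) [ZMOD 16]) ↔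
    ((n : ZMod 16) = -((a:ZMod 16) * (b:ZMod 16) * (c:ZMod 16))) := by
  constructor
  · intro h
    have := (ZMod.intCast_eq_intCast_iff n (-(a*b*c)) 16).2 (by exact_mod_cast h)
    push_cast at this
    exact this
  · intro h
    have h2 : (n : ZMod 16) = ((-(a*b*c) : ℤ) : ZMod 16) := by push_cast; exact h
    exact_mod_cast (ZMod.intCast_eq_intCast_iff n (-(a*b*c)) 16).1 h2

theorem stmt8 (a b c : ℤ) (ha : a ≠ 0) (hb : b ≠ 0) (hc : c ≠ 0)
    (hsa : Squarefree a) (hsb : Squarefree b) (hsc : Squarefree c)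
    (hab : IsCoprime a b) (hac : IsCoprime a c) (hbc : IsCoprime b c)
    (hea : Even a) (hob : Odd b) (hoc : Odd c) :
    ((¬ b + c ≡ a [ZMOD 8] ∧ ¬ b + c ≡ 2 * a [ZMOD 8]) →
      ∀ n : ℤ, ∃ x y z : ℤ, a * x ^ 2 + b * y ^ 2 + c * z ^ 2 ≡ n [ZMOD 16]) ∧
    ((b + c ≡ a [ZMOD 8] ∨ b + c ≡ 2 * a [ZMOD 8]) →
      ∀ n : ℤ, (∃ x y z : ℤ, a * x ^ 2 + b * y ^ 2 + c * z ^ 2 ≡ n [ZMOD 16]) ↔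
        ¬ n ≡ -(a * b * c) [ZMOD 16]) := by
  have h2a : (2:ℤ) ∣ a := hea.two_dvd
  have h4a : ¬ (4:ℤ) ∣ a := by
    intro h
    have h22 : (2*2:ℤ) ∣ a := by obtain ⟨k, hk⟩ := h; exact ⟨k, by linarith⟩
    have := hsa 2 h22
    rw [Int.isUnit_iff] at this
    omega
  have hA := memA16 a h2a h4a
  have hB := memO16 b hob
  have hC := memO16 c hoc
  have hk := key16 (a : ZMod 16) (b : ZMod 16) (c : ZMod 16) hA hB hC
  have e1 : (b + c ≡ a [ZMOD 8]) ↔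
      ((b:ZMod 16) + (c:ZMod 16) - (a:ZMod 16) = 0 ∨
       (b:ZMod 16) + (c:ZMod 16) - (a:ZMod 16) = 8) := by
    rw [m8iff]; push_cast; tauto
  have e2 : (b + c ≡ 2 * a [ZMOD 8]) ↔
      ((b:ZMod 16) + (c:ZMod 16) - 2*(a:ZMod 16) = 0 ∨
       (b:ZMod 16) + (c:ZMod 16) - 2*(a:ZMod 16) = 8) := by
    rw [m8iff]; push_cast; tauto
  constructor
  · rintro ⟨h1, h2⟩ n
    rw [repr_iff]
    exact hk.1 ⟨by rw [← e1]; exact h1, by rw [← e2]; exact h2⟩ (n : ZMod 16)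
  · intro h n
    rw [repr_iff, modeq16_iff]
    exact hk.2 (by rw [← e1, ← e2]; exact h) (n : ZMod 16)
end

section
/- Let p be an odd prime that does not divide ab. Then every integer n prime to p is represented modulo p^m by the form ax² + by² + cz² for every m ≥ 1. If moreover p does not divide c, then every integer is represented modulo p^m by the form for every m ≥ 1. -/
open Polynomial

/-- Solvability of `a x² + b y² = n` over `ZMod p` for odd prime `p` with `a b ≠ 0`. -/
lemma aux_solve_mod_p (p : ℕ) [hp : Fact p.Prime] (hodd : p % 2 = 1)
    (a b n : ZMod p) (ha : a ≠ 0) (hb : b ≠ 0) :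
    ∃ x y : ZMod p, a * x ^ 2 + b * y ^ 2 = n := by
  let f : (ZMod p)[X] := C a * X ^ 2
  let g : (ZMod p)[X] := C b * X ^ 2 - C n
  have hf2 : f.degree = 2 := Polynomial.degree_C_mul_X_pow 2 ha
  have hg2 : g.degree = 2 := by
    have h1 : (C b * X ^ 2 : (ZMod p)[X]).degree = 2 := Polynomial.degree_C_mul_X_pow 2 hb
    have h2 : (C n : (ZMod p)[X]).degree < 2 := by
      calc (C n : (ZMod p)[X]).degree ≤ 0 := Polynomial.degree_C_le
      _ < 2 := by norm_num
    rw [← h1] at h2 ⊢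
    exact Polynomial.degree_sub_eq_left_of_degree_lt h2
  obtain ⟨x, y, hxy⟩ : ∃ x y, f.eval x + g.eval y = 0 :=
    FiniteField.exists_root_sum_quadratic hf2 hg2 (by rwa [ZMod.card])
  refine ⟨x, y, ?_⟩
  simp only [f, g, eval_sub, eval_mul, eval_pow, eval_C, eval_X] at hxy
  linear_combination hxy

/-- Hensel lifting for one variable of a quadratic. -/
lemma aux_hensel (p : ℕ) (hp : p.Prime) (hp2 : p ≠ 2) (a r n x₀ : ℤ)
    (hpa : ¬ (p : ℤ) ∣ a) (hpx : ¬ (p : ℤ) ∣ x₀)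
    (h1 : (p : ℤ) ∣ a * x₀ ^ 2 + r - n) :
    ∀ m : ℕ, 1 ≤ m → ∃ x : ℤ, (p : ℤ) ^ m ∣ a * x ^ 2 + r - n := by
  have hpZ : Prime (p : ℤ) := Nat.prime_iff_prime_int.mp hp
  have hp2Z : ¬ (p : ℤ) ∣ 2 := by
    rw [show ((2 : ℤ)) = ((2 : ℕ) : ℤ) by norm_num, Int.natCast_dvd_natCast]
    intro h
    have := Nat.le_of_dvd (by norm_num) h
    have := hp.two_le
    omega
  suffices H : ∀ m : ℕ, 1 ≤ m → ∃ x : ℤ, (p : ℤ) ^ m ∣ a * x ^ 2 + r - n ∧ ¬ (p : ℤ) ∣ x by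
    intro m hm; obtain ⟨x, hx, _⟩ := H m hm; exact ⟨x, hx⟩
  intro m
  induction m with
  | zero => omega
  | succ m ih =>
    intro _
    rcases Nat.eq_zero_or_pos m with hm0 | hm'
    · subst hm0
      exact ⟨x₀, by simpa using h1, hpx⟩
    · obtain ⟨x, hx, hpx'⟩ := ih hm'
      obtain ⟨e, he⟩ := hx
      set P : ℤ := (p : ℤ) with hP
      set q : ℤ := (p : ℤ) ^ (m - 1) with hq
      have e1 : (P : ℤ) ^ m = q * P := by
        rw [hq, ← pow_succ]
        congr 1
        omega
      have e2 : (P : ℤ) ^ (m + 1) = q * P ^ 2 := by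
        rw [pow_succ, e1]; ring
      have he' : a * x ^ 2 + r - n = q * P * e := by rw [he, e1]
      have hcop : IsCoprime P (2 * a * x) := by
        rw [Prime.coprime_iff_not_dvd hpZ]
        intro h
        rcases hpZ.dvd_mul.mp h with h' | h'
        · rcases hpZ.dvd_mul.mp h' with h'' | h''
          · exact hp2Z h''
          · exact hpa h''
        · exact hpx' h'
      obtain ⟨u, v, huv⟩ := hcop
      have hu : v * (2 * a * x) = 1 - u * P := by linarith [huv]
      refine ⟨x + q * P * (-e * v), ?_, ?_⟩
      · have key : a * (x + q * P * (-e * v)) ^ 2 + r - n =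
            q * P ^ 2 * (e * u + a * q * (e * v) ^ 2) := by
          linear_combination he' - q * P * e * hu
        rw [key, e2]
        exact dvd_mul_right _ _
      · intro h
        apply hpx'
        have h2 : P ∣ q * P * (-e * v) := by
          exact dvd_mul_of_dvd_left (dvd_mul_left _ _) _
        have := dvd_sub h h2
        simpa using this

theorem stmt9 (a b c : ℤ) (ha : a ≠ 0) (hb : b ≠ 0) (hc : c ≠ 0)
    (hsa : Squarefree a) (hsb : Squarefree b) (hsc : Squarefree c)
    (hab : IsCoprime a b) (hac : IsCoprime a c) (hbc : IsCoprime b c)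
    (p : ℕ) (hp : p.Prime) (hp2 : p ≠ 2) (hpab : ¬ (p : ℤ) ∣ a * b) :
    (∀ n : ℤ, IsCoprime n (p : ℤ) → ∀ m : ℕ, 1 ≤ m →
      ∃ x y z : ℤ, a * x ^ 2 + b * y ^ 2 + c * z ^ 2 ≡ n [ZMOD (p : ℤ) ^ m]) ∧
    (¬ (p : ℤ) ∣ c → ∀ n : ℤ, ∀ m : ℕ, 1 ≤ m →
      ∃ x y z : ℤ, a * x ^ 2 + b * y ^ 2 + c * z ^ 2 ≡ n [ZMOD (p : ℤ) ^ m]) := by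
  haveI : Fact p.Prime := ⟨hp⟩
  have hpZ : Prime (p : ℤ) := Nat.prime_iff_prime_int.mp hp
  have hodd : p % 2 = 1 := hp.eq_two_or_odd.resolve_left hp2
  have hpa : ¬ (p : ℤ) ∣ a := fun h => hpab (h.mul_right b)
  have hpb : ¬ (p : ℤ) ∣ b := fun h => hpab (h.mul_left a)
  have haZ : ((a : ℤ) : ZMod p) ≠ 0 := by
    rwa [Ne, ZMod.intCast_zmod_eq_zero_iff_dvd]
  have hbZ : ((b : ℤ) : ZMod p) ≠ 0 := by
    rwa [Ne, ZMod.intCast_zmod_eq_zero_iff_dvd]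
  -- lifting solutions from ZMod p to ℤ
  have lift : ∀ N : ℤ, ∃ x₀ y₀ : ℤ, (p : ℤ) ∣ a * x₀ ^ 2 + b * y₀ ^ 2 - N := by
    intro N
    obtain ⟨x, y, hxy⟩ := aux_solve_mod_p p hodd (a : ZMod p) (b : ZMod p) (N : ZMod p) haZ hbZ
    refine ⟨(x.val : ℤ), (y.val : ℤ), ?_⟩
    rw [← ZMod.intCast_zmod_eq_zero_iff_dvd]
    push_cast
    rw [ZMod.natCast_val, ZMod.natCast_val, ZMod.cast_id, ZMod.cast_id]
    rw [sub_eq_zero]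
    exact hxy
  constructor
  · intro n hn m hm
    have hpn : ¬ (p : ℤ) ∣ n := by
      intro h
      obtain ⟨u, v, huv⟩ := hn
      exact hpZ.not_unit (isUnit_of_dvd_one (by
        rw [← huv]; exact dvd_add (Dvd.dvd.mul_left h u) (Dvd.dvd.mul_left dvd_rfl v)))
    obtain ⟨x₀, y₀, hlift⟩ := lift n
    by_cases hx0 : (p : ℤ) ∣ x₀
    · have hby : (p : ℤ) ∣ b * y₀ ^ 2 - n := by
        have h2 : (p : ℤ) ∣ a * x₀ ^ 2 := Dvd.dvd.mul_left (hx0.pow (by norm_num)) a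
        have := dvd_sub hlift h2
        have h3 : a * x₀ ^ 2 + b * y₀ ^ 2 - n - a * x₀ ^ 2 = b * y₀ ^ 2 - n := by ring
        rwa [h3] at this
      have hy0 : ¬ (p : ℤ) ∣ y₀ := by
        intro h
        apply hpn
        have h2 : (p : ℤ) ∣ b * y₀ ^ 2 := Dvd.dvd.mul_left (h.pow (by norm_num)) b
        have := dvd_sub h2 hby
        have h3 : b * y₀ ^ 2 - (b * y₀ ^ 2 - n) = n := by ring
        rwa [h3] at this
      obtain ⟨y, hy⟩ := aux_hensel p hp hp2 b (a * x₀ ^ 2) n y₀ hpb hy0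
        (by have h3 : b * y₀ ^ 2 + a * x₀ ^ 2 - n = a * x₀ ^ 2 + b * y₀ ^ 2 - n := by ring
            rw [h3]; exact hlift) m hm
      refine ⟨x₀, y, 0, Int.ModEq.symm (Int.modEq_iff_dvd.mpr ?_)⟩
      have h3 : a * x₀ ^ 2 + b * y ^ 2 + c * 0 ^ 2 - n = b * y ^ 2 + a * x₀ ^ 2 - n := by ring
      rw [h3]; exact hy
    · obtain ⟨x, hx⟩ := aux_hensel p hp hp2 a (b * y₀ ^ 2) n x₀ hpa hx0 hlift m hm
      refine ⟨x, y₀, 0, Int.ModEq.symm (Int.modEq_iff_dvd.mpr ?_)⟩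
      have h3 : a * x ^ 2 + b * y₀ ^ 2 + c * 0 ^ 2 - n = a * x ^ 2 + b * y₀ ^ 2 - n := by ring
      rw [h3]; exact hx
  · intro hpc n m hm
    obtain ⟨x₀, y₀, hlift⟩ := lift (n - c)
    obtain ⟨z, hz⟩ := aux_hensel p hp hp2 c (a * x₀ ^ 2 + b * y₀ ^ 2) n 1 hpc (fun h => (Nat.prime_iff_prime_int.mp hp).not_unit (isUnit_of_dvd_one h)) (by
      have h3 : c * 1 ^ 2 + (a * x₀ ^ 2 + b * y₀ ^ 2) - n = a * x₀ ^ 2 + b * y₀ ^ 2 - (n - c) := by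
        ring
      rw [h3]; exact hlift) m hm
    refine ⟨x₀, y₀, z, Int.ModEq.symm (Int.modEq_iff_dvd.mpr ?_)⟩
    have h3 : a * x₀ ^ 2 + b * y₀ ^ 2 + c * z ^ 2 - n =
        c * z ^ 2 + (a * x₀ ^ 2 + b * y₀ ^ 2) - n := by ring
    rw [h3]; exact hz
end

section
/- Let p be an odd prime dividing c, and let n be an integer prime to p. If it is not the case that both the Legendre symbol of -ab modulo p equals -1 and the Legendre symbol of n·(c/p) modulo p equals -1 (where c/p denotes the integer quotient of c by p), then n·p is represented modulo p^m by the form ax² + by² + cz² for every m ≥ 1. If both Legendre symbols equal -1, then n·p is not represented modulo p² by the form. -/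
private lemma exists_inv10 {d N : ℤ} (h : IsCoprime d N) : ∃ e, N ∣ d * e - 1 := by
  obtain ⟨u, v, huv⟩ := h
  exact ⟨u, ⟨-v, by linarith [huv]⟩⟩

/-- Hensel lifting for `d*z^2 ≡ n mod p^k`, odd `p`. -/
private lemma hensel_sq10 (p : ℕ) (hp : p.Prime) (hp2 : ¬ (p:ℤ) ∣ 2) (d n : ℤ)
    (hd : ¬ (p:ℤ) ∣ d) (hn : ¬ (p:ℤ) ∣ n)
    (hbase : ∃ z, (p:ℤ) ∣ n - d * z ^ 2) :
    ∀ k : ℕ, ∃ z, (p:ℤ) ^ k ∣ n - d * z ^ 2 := by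
  have hpz : Prime (p : ℤ) := Nat.prime_iff_prime_int.mp hp
  intro k
  induction k with
  | zero => exact ⟨0, by simp⟩
  | succ k ih =>
    rcases Nat.eq_zero_or_pos k with rfl | hk1
    · obtain ⟨z, hz⟩ := hbase
      exact ⟨z, by simpa using hz⟩
    · obtain ⟨z, hz⟩ := ih
      have hz1 : (p:ℤ) ∣ n - d * z ^ 2 := dvd_trans (dvd_pow_self _ hk1.ne') hz
      have hpzz : ¬ (p:ℤ) ∣ z := by
        intro hdz
        apply hn
        have h1 : (p:ℤ) ∣ d * z ^ 2 := Dvd.dvd.mul_left (hdz.pow (by norm_num)) d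
        have := dvd_add hz1 h1
        simpa using this
      obtain ⟨r, hr⟩ := hz
      have hcop : IsCoprime (2 * d * z) ((p:ℤ)) := by
        refine IsCoprime.mul_left (IsCoprime.mul_left ?_ ?_) ?_
        · exact (hpz.coprime_iff_not_dvd.mpr hp2).symm
        · exact (hpz.coprime_iff_not_dvd.mpr hd).symm
        · exact (hpz.coprime_iff_not_dvd.mpr hpzz).symm
      obtain ⟨e, he⟩ := exists_inv10 hcop
      set t : ℤ := e * r with ht
      have hpr : (p:ℤ) ∣ r - 2 * d * z * t := by
        have heq : r - 2 * d * z * t = -r * (2 * d * z * e - 1) := by rw [ht]; ring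
        rw [heq]
        exact Dvd.dvd.mul_left he _
      obtain ⟨s, hs⟩ := hpr
      refine ⟨z + t * (p:ℤ) ^ k, ⟨s + (-(d * t ^ 2)) * (p:ℤ) ^ (k-1), ?_⟩⟩
      have expand : n - d * (z + t * (p:ℤ) ^ k) ^ 2 =
          (p:ℤ) ^ k * (r - 2 * d * z * t) - d * t ^ 2 * ((p:ℤ) ^ k) ^ 2 := by
        linear_combination hr
      have h2 : ((p:ℤ) ^ k) ^ 2 = (p:ℤ) ^ (k + 1) * (p:ℤ) ^ (k - 1) := by
        rw [← pow_mul, ← pow_add]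
        congr 1
        omega
      rw [expand, hs, h2]
      ring

theorem stmt10 (a b c : ℤ) (ha : a ≠ 0) (hb : b ≠ 0) (hc : c ≠ 0)
    (hsa : Squarefree a) (hsb : Squarefree b) (hsc : Squarefree c)
    (hab : IsCoprime a b) (hac : IsCoprime a c) (hbc : IsCoprime b c)
    (p : ℕ) (hp : p.Prime) (hp2 : p ≠ 2) (hpc : (p : ℤ) ∣ c)
    (n : ℤ) (hn : IsCoprime n (p : ℤ)) :
    (¬ (jacobiSym (-a * b) p = -1 ∧ jacobiSym (n * (c / (p : ℤ))) p = -1) →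
      ∀ m : ℕ, 1 ≤ m →
        ∃ x y z : ℤ, a * x ^ 2 + b * y ^ 2 + c * z ^ 2 ≡ n * p [ZMOD (p : ℤ) ^ m]) ∧
    ((jacobiSym (-a * b) p = -1 ∧ jacobiSym (n * (c / (p : ℤ))) p = -1) →
      ¬ ∃ x y z : ℤ, a * x ^ 2 + b * y ^ 2 + c * z ^ 2 ≡ n * p [ZMOD (p : ℤ) ^ 2]) := by
  haveI : Fact p.Prime := ⟨hp⟩
  haveI : NeZero p := ⟨hp.pos.ne'⟩
  have hpz : Prime (p : ℤ) := Nat.prime_iff_prime_int.mp hp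
  have hpa : ¬ (p:ℤ) ∣ a := fun h => hpz.not_unit (hac.isUnit_of_dvd' h hpc)
  have hpb : ¬ (p:ℤ) ∣ b := fun h => hpz.not_unit (hbc.isUnit_of_dvd' h hpc)
  have hpn : ¬ (p:ℤ) ∣ n := fun h => hpz.not_unit (hn.isUnit_of_dvd' h dvd_rfl)
  set c' : ℤ := c / (p:ℤ) with hc'def
  have hcc' : c = (p:ℤ) * c' := (Int.mul_ediv_cancel' hpc).symm
  have hpc' : ¬ (p:ℤ) ∣ c' := by
    intro h
    obtain ⟨u, hu⟩ := h
    exact hpz.not_unit (hsc (p:ℤ) ⟨u, by rw [hcc', hu]; ring⟩)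
  have hpd2 : ¬ (p:ℤ) ∣ 2 := by
    intro h
    have h2 : (p:ℕ) ∣ 2 := by exact_mod_cast h
    exact hp2 ((Nat.prime_dvd_prime_iff_eq hp Nat.prime_two).mp h2)
  have hpab : ¬ (p:ℤ) ∣ -a * b := by
    rw [neg_mul, dvd_neg]
    intro h
    rcases hpz.dvd_mul.mp h with h' | h'
    exacts [hpa h', hpb h']
  -- jacobi symbol ≠ -1  ↔  square mod p
  have jds : ∀ u : ℤ, jacobiSym u p ≠ -1 → ∃ x : ℤ, (p:ℤ) ∣ u - x ^ 2 := by
    intro u h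
    rw [← jacobiSym.legendreSym.to_jacobiSym] at h
    have hsq : IsSquare ((u : ℤ) : ZMod p) := by
      by_contra h'
      exact h ((legendreSym.eq_neg_one_iff p).mpr h')
    obtain ⟨r, hr⟩ := hsq
    refine ⟨(r.val : ℤ), ?_⟩
    have hcast : ((r.val : ℕ) : ZMod p) = r := by
      simp [ZMod.natCast_val, ZMod.cast_id]
    have hzero : ((u - (r.val:ℤ) ^ 2 : ℤ) : ZMod p) = 0 := by
      push_cast
      rw [hcast, hr]
      ring
    rwa [ZMod.intCast_zmod_eq_zero_iff_dvd] at hzero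
  have sdj : ∀ u x : ℤ, (p:ℤ) ∣ u - x ^ 2 → jacobiSym u p ≠ -1 := by
    intro u x h hJ
    rw [← jacobiSym.legendreSym.to_jacobiSym] at hJ
    apply (legendreSym.eq_neg_one_iff p).mp hJ
    refine ⟨(x : ZMod p), ?_⟩
    have hzero : ((u - x ^ 2 : ℤ) : ZMod p) = 0 := (ZMod.intCast_zmod_eq_zero_iff_dvd _ _).mpr h
    push_cast at hzero
    linear_combination hzero
  constructor
  · -- Part 1: representability
    intro hno m hm
    rw [not_and_or] at hno
    rcases hno with hJ1 | hJ2
    · -- Case A: -ab is a square mod p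
      obtain ⟨s₀, hs₀⟩ := jds _ hJ1
      obtain ⟨s, hs⟩ := hensel_sq10 p hp hpd2 1 (-a*b) hpz.not_dvd_one hpab
        ⟨s₀, by simpa using hs₀⟩ m
      rw [one_mul] at hs
      have cop : ∀ d : ℤ, ¬ (p:ℤ) ∣ d → IsCoprime d ((p:ℤ)^m) := fun d hd =>
        ((hpz.coprime_iff_not_dvd.mpr hd).symm).pow_right
      have hps : ¬ (p:ℤ) ∣ s := by
        intro h
        apply hpab
        have h1 : (p:ℤ) ∣ s ^ 2 := h.pow (by norm_num)
        have h3 : (p:ℤ) ∣ -a*b - s^2 :=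
          dvd_trans (dvd_pow_self _ (by omega : m ≠ 0)) hs
        have := dvd_add h3 h1
        simpa using this
      obtain ⟨e, he⟩ := exists_inv10 (cop a hpa)
      obtain ⟨t, ht⟩ := exists_inv10 (cop s hps)
      obtain ⟨i2, hi2⟩ := exists_inv10 (cop 2 hpd2)
      refine ⟨e * i2 * (a*n*(p:ℤ) + 1), t * i2 * (a*n*(p:ℤ) - 1), 0, ?_⟩
      have hcast : ((p:ℤ))^m = ((p^m : ℕ) : ℤ) := by push_cast; ring
      rw [hcast] at he ht hi2 hs ⊢
      rw [← ZMod.intCast_eq_intCast_iff]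
      have he' := (ZMod.intCast_zmod_eq_zero_iff_dvd _ (p^m)).mpr he
      have ht' := (ZMod.intCast_zmod_eq_zero_iff_dvd _ (p^m)).mpr ht
      have hi2' := (ZMod.intCast_zmod_eq_zero_iff_dvd _ (p^m)).mpr hi2
      have hs' := (ZMod.intCast_zmod_eq_zero_iff_dvd _ (p^m)).mpr hs
      push_cast at he' ht' hi2' hs' ⊢
      linear_combination
        ((e:ZMod (p^m))*(i2:ZMod (p^m))^2*((a:ZMod (p^m))*(n:ZMod (p^m))*(p:ZMod (p^m))+1)^2
          - (b:ZMod (p^m))*(t:ZMod (p^m))^2*(i2:ZMod (p^m))^2*((a:ZMod (p^m))*(n:ZMod (p^m))*(p:ZMod (p^m))-1)^2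
          + (n:ZMod (p^m))*(p:ZMod (p^m))) * he'
        + ((e:ZMod (p^m))*(a:ZMod (p^m))*(n:ZMod (p^m))*(p:ZMod (p^m))*(2*(i2:ZMod (p^m))+1)) * hi2'
        + (-((e:ZMod (p^m))*((s:ZMod (p^m))*(t:ZMod (p^m))+1)*(i2:ZMod (p^m))^2*((a:ZMod (p^m))*(n:ZMod (p^m))*(p:ZMod (p^m))-1)^2)) * ht'
        + (-((e:ZMod (p^m))*(t:ZMod (p^m))^2*(i2:ZMod (p^m))^2*((a:ZMod (p^m))*(n:ZMod (p^m))*(p:ZMod (p^m))-1)^2)) * hs'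
    · -- Case B: n*c' is a square mod p
      obtain ⟨w, hw⟩ := jds _ hJ2
      obtain ⟨e₀, he₀⟩ := exists_inv10 ((hpz.coprime_iff_not_dvd.mpr hpc').symm)
      have hbase : (p:ℤ) ∣ n - c' * (w * e₀) ^ 2 := by
        have heq : n - c' * (w * e₀) ^ 2 =
            (c' * e₀^2) * (n * c' - w^2) + (-n * (c'*e₀ + 1)) * (c' * e₀ - 1) := by ring
        rw [heq]
        exact dvd_add (Dvd.dvd.mul_left hw _) (Dvd.dvd.mul_left he₀ _)
      obtain ⟨z, hz⟩ := hensel_sq10 p hp hpd2 c' n hpc' hpn ⟨w * e₀, hbase⟩ (m - 1)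
      refine ⟨0, 0, z, ?_⟩
      rw [Int.modEq_iff_dvd]
      obtain ⟨u, hu⟩ := hz
      have heq : n * (p:ℤ) - (a * 0 ^ 2 + b * 0 ^ 2 + c * z ^ 2)
          = (p:ℤ) * (n - c' * z^2) := by rw [hcc']; ring
      rw [heq, hu]
      have hmm : (p:ℤ)^m = (p:ℤ) * (p:ℤ)^(m-1) := by
        rw [← pow_succ']
        congr 1
        omega
      exact ⟨u, by rw [hmm]; ring⟩
  · -- Part 2: non-representability
    rintro ⟨hJ1, hJ2⟩ ⟨x, y, z, hxyz⟩
    have hD : (p:ℤ)^2 ∣ n*(p:ℤ) - (a * x ^ 2 + b * y ^ 2 + c * z ^ 2) := hxyz.dvd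
    have hp1 : (p:ℤ) ∣ n*(p:ℤ) - (a * x ^ 2 + b * y ^ 2 + c * z ^ 2) :=
      dvd_trans (dvd_pow_self _ two_ne_zero) hD
    have hS : (p:ℤ) ∣ a * x ^ 2 + b * y ^ 2 := by
      have h1 : (p:ℤ) ∣ c * z ^ 2 := hpc.mul_right _
      have h2 : (p:ℤ) ∣ n * (p:ℤ) := dvd_mul_left _ _
      have heq : a*x^2 + b*y^2 =
          -(n*(p:ℤ) - (a*x^2+b*y^2+c*z^2)) + n*(p:ℤ) - c*z^2 := by ring
      rw [heq]
      exact dvd_sub (dvd_add (dvd_neg.mpr hp1) h2) h1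
    have hpx : (p:ℤ) ∣ x := by
      by_contra hx
      obtain ⟨e, he⟩ := exists_inv10 ((hpz.coprime_iff_not_dvd.mpr hx).symm)
      refine sdj (-a*b) (b*y*e) ?_ hJ1
      have heq : (-a*b) - (b*y*e)^2 =
          (-(b*e^2))*(a*x^2+b*y^2) + (a*b*(x*e+1))*(x*e-1) := by ring
      rw [heq]
      exact dvd_add (Dvd.dvd.mul_left hS _) (Dvd.dvd.mul_left he _)
    have hpy : (p:ℤ) ∣ y := by
      by_contra hy
      obtain ⟨f, hf⟩ := exists_inv10 ((hpz.coprime_iff_not_dvd.mpr hy).symm)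
      refine sdj (-a*b) (a*x*f) ?_ hJ1
      have heq : (-a*b) - (a*x*f)^2 =
          (-(a*f^2))*(a*x^2+b*y^2) + (a*b*(y*f+1))*(y*f-1) := by ring
      rw [heq]
      exact dvd_add (Dvd.dvd.mul_left hS _) (Dvd.dvd.mul_left hf _)
    have h2x : (p:ℤ)^2 ∣ a * x^2 := by
      obtain ⟨x₀, rfl⟩ := hpx
      exact ⟨a * x₀^2, by ring⟩
    have h2y : (p:ℤ)^2 ∣ b * y^2 := by
      obtain ⟨y₀, rfl⟩ := hpy
      exact ⟨b * y₀^2, by ring⟩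
    have h3 : (p:ℤ)^2 ∣ n*(p:ℤ) - c*z^2 := by
      have heq : n*(p:ℤ) - c*z^2 =
          (n*(p:ℤ) - (a*x^2+b*y^2+c*z^2)) + a*x^2 + b*y^2 := by ring
      rw [heq]
      exact dvd_add (dvd_add hD h2x) h2y
    have hp0 : (p:ℤ) ≠ 0 := by exact_mod_cast hp.pos.ne'
    have h4 : (p:ℤ) ∣ n - c' * z^2 := by
      obtain ⟨u, hu⟩ := h3
      refine ⟨u, ?_⟩
      apply mul_left_cancel₀ hp0
      calc (p:ℤ) * (n - c' * z^2) = n*(p:ℤ) - c*z^2 := by rw [hcc']; ring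
        _ = (p:ℤ)^2 * u := hu
        _ = (p:ℤ) * ((p:ℤ) * u) := by ring
    refine sdj (n * c') (c' * z) ?_ hJ2
    have heq : n * c' - (c' * z)^2 = c' * (n - c' * z^2) := by ring
    rw [heq]
    exact Dvd.dvd.mul_left h4 _
end

section
/- Suppose a, b, c are not all of the same sign. Then the form ax² + by² + cz² represents every integer over the integers (i.e., for every integer n there exist integers x, y, z with ax² + by² + cz² = n) if and only if there exist integers x, y, z with ax² + by² + cz² ≡ -abc (mod (abc)²). -/
/-!
Modulo a prime `p ∣ a` the congruence forces `-bc` to be a square, so `a x² + b y² + c z²`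
factors into two linear forms mod `p`, hence (Chinese remainder theorem) mod `|abc|`. When the
signs are mixed, Legendre's pigeonhole argument turns a small zero of one linear factor into a
nontrivial zero `q`, which may be taken primitive. Squarefreeness and coprimality then make
`(a q₁, b q₂, c q₃)` unimodular: `B(q, r) = 1` for some `r`, where `B` is the polar form, so
`Q(t q + v) = Q(v) + 2 t B(q, v)` sweeps out the class of `Q(v)` mod `2 B(q, v)`. Vectors `v`
with `B(q, v) ∈ {1, 2}` then reach every integer, by a parity analysis.
-/

def SplitsMod (a b c : ℤ) (m : ℕ) : Prop :=
  ∃ α β γ α' β' γ' : ZMod m, ∀ x y z : ZMod m,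
    a * x ^ 2 + b * y ^ 2 + c * z ^ 2 = (α * x + β * y + γ * z) * (α' * x + β' * y + γ' * z)

def IsIsotropic (a b c : ℤ) : Prop :=
  ∃ x y z : ℤ, (x, y, z) ≠ 0 ∧ a * x ^ 2 + b * y ^ 2 + c * z ^ 2 = 0

section

variable {a b c : ℤ}

theorem splitsMod_one : SplitsMod a b c 1 :=
  ⟨0, 0, 0, 0, 0, 0, fun _ _ _ => Subsingleton.elim _ _⟩

theorem SplitsMod.rotate {m : ℕ} (h : SplitsMod a b c m) : SplitsMod b c a m := by
  obtain ⟨α, β, γ, α', β', γ', h⟩ := h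
  exact ⟨β, γ, α, β', γ', α', fun x y z => by linear_combination h z x y⟩

theorem SplitsMod.neg {m : ℕ} (h : SplitsMod a b c m) : SplitsMod (-a) (-b) (-c) m := by
  obtain ⟨α, β, γ, α', β', γ', h⟩ := h
  exact ⟨-α, -β, -γ, α', β', γ', fun x y z => by push_cast; linear_combination -h x y z⟩

theorem SplitsMod.mul {m n : ℕ} (hmn : m.Coprime n) (hm : SplitsMod a b c m)
    (hn : SplitsMod a b c n) : SplitsMod a b c (m * n) := by
  obtain ⟨α₁, β₁, γ₁, α₁', β₁', γ₁', h₁⟩ := hm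
  obtain ⟨α₂, β₂, γ₂, α₂', β₂', γ₂', h₂⟩ := hn
  let e := ZMod.chineseRemainder hmn
  refine ⟨e.symm (α₁, α₂), e.symm (β₁, β₂), e.symm (γ₁, γ₂), e.symm (α₁', α₂'),
    e.symm (β₁', β₂'), e.symm (γ₁', γ₂'), fun x y z => e.injective ?_⟩
  simp only [map_add, map_mul, map_pow, map_intCast, RingEquiv.apply_symm_apply]
  ext
  · simp [h₁]
  · simp [h₂]

theorem splitsMod_of_dvd {m : ℕ} (hma : (m : ℤ) ∣ a) (hb : IsUnit (b : ZMod m))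
    (hbc : IsSquare (-(b * c) : ZMod m)) : SplitsMod a b c m := by
  obtain ⟨s, hs⟩ := hbc
  obtain ⟨u, hu⟩ := hb.exists_left_inv
  have ha : (a : ZMod m) = 0 := (ZMod.intCast_zmod_eq_zero_iff_dvd a m).2 hma
  refine ⟨0, 1, -(u * s), 0, b, s, fun x y z => ?_⟩
  linear_combination x ^ 2 * ha + (s * y * z - c * z ^ 2) * hu - u * z ^ 2 * hs

theorem isSquare_neg_mul_of_sq_dvd {p : ℕ} [hp : Fact p.Prime] (hpa : (p : ℤ) ∣ a)
    (hsa : Squarefree a) (hac : IsCoprime a c) {x y z : ℤ}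
    (h : (p : ℤ) ^ 2 ∣ a * x ^ 2 + b * y ^ 2 + c * z ^ 2 + a * b * c) :
    IsSquare (-(b * c) : ZMod p) := by
  have hp' : Prime (p : ℤ) := Nat.prime_iff_prime_int.mp hp.out
  have hyz : (b * y ^ 2 + c * z ^ 2 : ZMod p) = 0 := by
    have e : b * y ^ 2 + c * z ^ 2 = (a * x ^ 2 + b * y ^ 2 + c * z ^ 2 + a * b * c)
        - a * (x ^ 2 + b * c) := by ring
    have : (p : ℤ) ∣ b * y ^ 2 + c * z ^ 2 :=
      e ▸ dvd_sub ((dvd_pow_self _ two_ne_zero).trans h) (hpa.mul_right _)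
    exact_mod_cast (ZMod.intCast_zmod_eq_zero_iff_dvd _ p).2 this
  by_cases hy : (y : ZMod p) = 0
  -- then `p ∣ y, z`, so `p² ∣ a (x² + bc)` while `p² ∤ a`
  · have hc : (c : ZMod p) ≠ 0 := fun h0 => hp'.not_isUnit
      (hac.isUnit_of_dvd' hpa ((ZMod.intCast_zmod_eq_zero_iff_dvd c p).1 h0))
    have hz : (z : ZMod p) = 0 := by simpa [hy, hc] using hyz
    obtain ⟨y, rfl⟩ := (ZMod.intCast_zmod_eq_zero_iff_dvd _ p).1 hy
    obtain ⟨z, rfl⟩ := (ZMod.intCast_zmod_eq_zero_iff_dvd _ p).1 hz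
    obtain ⟨a, rfl⟩ := hpa
    have ha : ¬ (p : ℤ) ∣ a := fun ⟨a', ha'⟩ => hp'.not_isUnit (hsa p ⟨a', by rw [ha']; ring⟩)
    have hx : (p : ℤ) ∣ x ^ 2 + b * c := by
      refine (hp'.dvd_or_dvd ?_).resolve_left ha
      rw [← mul_dvd_mul_iff_left hp'.ne_zero, ← sq]
      have e : p * (a * (x ^ 2 + b * c)) = (p * a * x ^ 2 + b * (p * y) ^ 2 + c * (p * z) ^ 2
          + p * a * b * c) - p ^ 2 * (b * y ^ 2 + c * z ^ 2) := by ring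
      exact e ▸ dvd_sub h (dvd_mul_right _ _)
    refine ⟨x, ?_⟩
    have := (ZMod.intCast_zmod_eq_zero_iff_dvd _ p).2 hx
    push_cast at this
    linear_combination -this
  · refine ⟨c * z * (y : ZMod p)⁻¹, ?_⟩
    field_simp
    linear_combination -c * hyz

theorem splitsMod_natAbs (ha : a ≠ 0) (hsa : Squarefree a) (hab : IsCoprime a b)
    (h : ∀ p : ℕ, p.Prime → (p : ℤ) ∣ a → IsSquare (-(b * c) : ZMod p)) :
    SplitsMod a b c a.natAbs := by
  suffices ∀ d : ℕ, d ∣ a.natAbs → SplitsMod a b c d from this _ dvd_rfl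
  intro d
  induction d using Nat.recOnPosPrimePosCoprime with
  | prime_pow p k hp hk =>
    intro hd
    obtain rfl : k = 1 := ((Nat.squarefree_pow_iff hp.ne_one hk.ne').1
      ((Int.squarefree_natAbs.2 hsa).squarefree_of_dvd hd)).2
    rw [pow_one] at hd ⊢
    have hpa : (p : ℤ) ∣ a := Int.natCast_dvd.2 hd
    have hp' : Prime (p : ℤ) := Nat.prime_iff_prime_int.mp hp
    have := Fact.mk hp
    refine splitsMod_of_dvd hpa (isUnit_iff_ne_zero.2 fun hb => hp'.not_isUnit ?_) (h p hp hpa)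
    exact hab.isUnit_of_dvd' hpa ((ZMod.intCast_zmod_eq_zero_iff_dvd b p).1 hb)
  | zero => exact fun hd => absurd (Int.natAbs_eq_zero.1 (zero_dvd_iff.1 hd)) ha
  | one => exact fun _ => splitsMod_one
  | coprime d e _ _ hde hd he =>
    exact fun h => (hd (dvd_of_mul_right_dvd h)).mul hde (he (dvd_of_mul_left_dvd h))

theorem splitsMod_natAbs_of_sq_dvd (ha : a ≠ 0) (hsa : Squarefree a) (hab : IsCoprime a b)
    (hac : IsCoprime a c) {x y z : ℤ} (h : a ^ 2 ∣ a * x ^ 2 + b * y ^ 2 + c * z ^ 2 + a * b * c) :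
    SplitsMod a b c a.natAbs :=
  splitsMod_natAbs ha hsa hab fun _ hp hpa =>
    have := Fact.mk hp
    isSquare_neg_mul_of_sq_dvd hpa hsa hac ((pow_dvd_pow_of_dvd hpa 2).trans h)

theorem splitsMod_of_modEq (ha : a ≠ 0) (hb : b ≠ 0) (hc : c ≠ 0)
    (hsa : Squarefree a) (hsb : Squarefree b) (hsc : Squarefree c)
    (hab : IsCoprime a b) (hac : IsCoprime a c) (hbc : IsCoprime b c) {x y z : ℤ}
    (h : a * x ^ 2 + b * y ^ 2 + c * z ^ 2 ≡ -(a * b * c) [ZMOD (a * b * c) ^ 2]) :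
    SplitsMod a b c (a * b * c).natAbs := by
  have hdvd : (a * b * c) ^ 2 ∣ a * x ^ 2 + b * y ^ 2 + c * z ^ 2 + a * b * c := by
    simpa using h.symm.dvd
  have hdvd_of : ∀ d : ℤ, d ∣ a * b * c → d ^ 2 ∣ a * x ^ 2 + b * y ^ 2 + c * z ^ 2 + a * b * c :=
    fun d hd => (pow_dvd_pow_of_dvd hd 2).trans hdvd
  have hSa := splitsMod_natAbs_of_sq_dvd ha hsa hab hac (hdvd_of a ⟨b * c, by ring⟩)
  have hSb := splitsMod_natAbs_of_sq_dvd hb hsb hbc hab.symm (x := y) (y := z) (z := x)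
    (by convert hdvd_of b ⟨a * c, by ring⟩ using 1; ring)
  have hSc := splitsMod_natAbs_of_sq_dvd hc hsc hac.symm hbc.symm (x := z) (y := x) (z := y)
    (by convert hdvd_of c ⟨a * b, by ring⟩ using 1; ring)
  have cop : ∀ {u v : ℤ}, IsCoprime u v → u.natAbs.Coprime v.natAbs :=
    fun h => Int.isCoprime_iff_gcd_eq_one.1 h
  rw [Int.natAbs_mul, Int.natAbs_mul]
  exact (hSa.mul (cop hab) hSb.rotate.rotate).mul ((cop hac).mul_left (cop hbc)) hSc.rotate

theorem IsIsotropic.rotate (h : IsIsotropic a b c) : IsIsotropic b c a := by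
  obtain ⟨x, y, z, hne, h⟩ := h
  exact ⟨y, z, x, by simpa [and_comm, and_left_comm] using hne, by linear_combination h⟩

theorem IsIsotropic.of_neg (h : IsIsotropic (-a) (-b) (-c)) : IsIsotropic a b c := by
  obtain ⟨x, y, z, hne, h⟩ := h
  exact ⟨x, y, z, hne, by linear_combination -h⟩

-- Legendre's identity: `Q(xz - by, yz + ax, z² + ab) = (z² + ab) (Q(x, y, z) + abc)`.
theorem isIsotropic_of_eq_neg_mul (ha : a ≠ 0) {x y z : ℤ}
    (h : a * x ^ 2 + b * y ^ 2 + c * z ^ 2 = -(a * b * c)) : IsIsotropic a b c := by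
  by_cases hz : z ^ 2 + a * b = 0
  · exact ⟨z, a, 0, by simp [ha], by linear_combination a * hz⟩
  · exact ⟨x * z - b * y, y * z + a * x, z ^ 2 + a * b, by simp [hz],
      by linear_combination (z ^ 2 + a * b) * h⟩

theorem exists_ne_zero_abs_le_linear_eq_zero {m : ℕ} [NeZero m] (α β γ : ZMod m) {P Q R : ℕ}
    (h : m < (P + 1) * (Q + 1) * (R + 1)) :
    ∃ x y z : ℤ, (x, y, z) ≠ 0 ∧ |x| ≤ P ∧ |y| ≤ Q ∧ |z| ≤ R ∧ α * x + β * y + γ * z = 0 := by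
  let box := Finset.range (P + 1) ×ˢ Finset.range (Q + 1) ×ˢ Finset.range (R + 1)
  have hcard : (Finset.univ : Finset (ZMod m)).card < box.card := by
    simpa [box, ZMod.card, mul_assoc] using h
  obtain ⟨u, hu, v, hv, huv, heq⟩ := Finset.exists_ne_map_eq_of_card_lt_of_maps_to hcard
    (f := fun u : ℕ × ℕ × ℕ => α * u.1 + β * u.2.1 + γ * u.2.2)
    (fun _ _ => Finset.mem_coe.2 (Finset.mem_univ _))
  simp only [box, Finset.mem_product, Finset.mem_range] at hu hv
  refine ⟨u.1 - v.1, u.2.1 - v.2.1, u.2.2 - v.2.2, ?_, ?_, ?_, ?_, ?_⟩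
  · intro h0
    simp only [Prod.mk_eq_zero, sub_eq_zero, Nat.cast_inj] at h0
    exact huv (Prod.ext h0.1 (Prod.ext h0.2.1 h0.2.2))
  · rw [abs_le]; omega
  · rw [abs_le]; omega
  · rw [abs_le]; omega
  · push_cast; linear_combination heq

theorem exists_sq_le_lt_sq {n : ℤ} (hn : 0 ≤ n) : ∃ s : ℕ, (s : ℤ) ^ 2 ≤ n ∧ n < (s + 1) ^ 2 := by
  obtain ⟨k, rfl⟩ := Int.eq_ofNat_of_zero_le hn
  exact ⟨k.sqrt, by exact_mod_cast k.sqrt_le', by exact_mod_cast k.lt_succ_sqrt'⟩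

theorem exists_ne_zero_sq_le_linear_eq_zero {m : ℕ} [NeZero m] (α β γ : ZMod m) {A B C : ℤ}
    (hA : 0 ≤ A) (hB : 0 ≤ B) (hC : 0 ≤ C) (h : (m : ℤ) ^ 2 < (A + 1) * (B + 1) * (C + 1)) :
    ∃ x y z : ℤ, (x, y, z) ≠ 0 ∧ x ^ 2 ≤ A ∧ y ^ 2 ≤ B ∧ z ^ 2 ≤ C ∧
      α * x + β * y + γ * z = 0 := by
  obtain ⟨P, hP, hP'⟩ := exists_sq_le_lt_sq hA
  obtain ⟨Q, hQ, hQ'⟩ := exists_sq_le_lt_sq hB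
  obtain ⟨R, hR, hR'⟩ := exists_sq_le_lt_sq hC
  have hcount : m < (P + 1) * (Q + 1) * (R + 1) := by
    have : (m : ℤ) ^ 2 < (((P + 1) * (Q + 1) * (R + 1) : ℕ) : ℤ) ^ 2 :=
      calc (m : ℤ) ^ 2 < (A + 1) * (B + 1) * (C + 1) := h
        _ ≤ ((P : ℤ) + 1) ^ 2 * ((Q : ℤ) + 1) ^ 2 * ((R : ℤ) + 1) ^ 2 := by
          gcongr <;> linarith
        _ = _ := by push_cast; ring
    exact_mod_cast lt_of_pow_lt_pow_left₀ 2 (by positivity) this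
  obtain ⟨x, y, z, hne, hx, hy, hz, hL⟩ := exists_ne_zero_abs_le_linear_eq_zero α β γ hcount
  have sq_le {t : ℤ} {s : ℕ} (ht : |t| ≤ s) : t ^ 2 ≤ (s : ℤ) ^ 2 :=
    sq_le_sq' (abs_le.1 ht).1 (abs_le.1 ht).2
  exact ⟨x, y, z, hne, (sq_le hx).trans hP, (sq_le hy).trans hQ, (sq_le hz).trans hR, hL⟩

theorem isIsotropic_of_splitsMod_of_pos_of_neg (ha : 0 < a) (hb : b < 0) (hc : c < 0)
    (h : SplitsMod a b c (a * b * c).natAbs) : IsIsotropic a b c := by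
  have hbc : 0 < b * c := mul_pos_of_neg_of_neg hb hc
  have hab : 0 < -(a * b) := neg_pos.2 (mul_neg_of_pos_of_neg ha hb)
  have hac : 0 < -(a * c) := neg_pos.2 (mul_neg_of_pos_of_neg ha hc)
  have habc : 0 < a * b * c := by rw [mul_assoc]; exact mul_pos ha hbc
  set m := (a * b * c).natAbs
  have hm : (m : ℤ) = a * b * c := Int.natAbs_of_nonneg habc.le
  have : NeZero m := ⟨by omega⟩
  obtain ⟨α, β, γ, α', β', γ', hsplit⟩ := h
  -- In this box `-2abc ≤ Q < abc`, and `Q ≡ 0 mod abc`, so `Q ∈ {0, -abc, -2abc}`.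
  obtain ⟨x, y, z, hne, hx, hy, hz, hL⟩ := exists_ne_zero_sq_le_linear_eq_zero α β γ
    (A := b * c - 1) (B := -(a * c)) (C := -(a * b)) (by omega) hac.le hab.le
    (by rw [hm]; nlinarith [mul_pos hbc (add_pos hab hac)])
  obtain ⟨k, hk⟩ : (m : ℤ) ∣ a * x ^ 2 + b * y ^ 2 + c * z ^ 2 := by
    rw [← ZMod.intCast_zmod_eq_zero_iff_dvd]
    push_cast
    rw [hsplit, hL, zero_mul]
  rw [hm] at hk
  have hx' := mul_le_mul_of_nonneg_left hx ha.le
  have hy' := mul_le_mul_of_nonpos_left hy hb.le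
  have hz' := mul_le_mul_of_nonpos_left hz hc.le
  have hk1 : k < 1 := by nlinarith
  have hk2 : -2 ≤ k := by nlinarith
  interval_cases k
  · have hy2 : y ^ 2 = -(a * c) := mul_left_cancel₀ hb.ne (by nlinarith [sq_nonneg x])
    exact ⟨y, 0, a, by simp [ha.ne'], by linear_combination a * hy2⟩
  · exact isIsotropic_of_eq_neg_mul (x := x) (y := y) (z := z) ha.ne' (by linear_combination hk)
  · exact ⟨x, y, z, hne, by linear_combination hk⟩

theorem isIsotropic_of_splitsMod (hab : a * b < 0) (hac : a * c < 0)
    (h : SplitsMod a b c (a * b * c).natAbs) : IsIsotropic a b c := by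
  wlog ha : 0 < a generalizing a b c
  · have ha' : a ≠ 0 := left_ne_zero_of_mul hab.ne
    refine (this (by rwa [neg_mul_neg]) (by rwa [neg_mul_neg]) ?_ (by omega)).of_neg
    rw [neg_mul_neg, mul_neg, Int.natAbs_neg]
    exact h.neg
  exact isIsotropic_of_splitsMod_of_pos_of_neg ha (neg_of_mul_neg_right hab ha.le)
    (neg_of_mul_neg_right hac ha.le) h

theorem isIsotropic_of_splitsMod_of_ne_zero (ha : a ≠ 0) (hb : b ≠ 0) (hc : c ≠ 0)
    (hsign : ¬ ((0 < a ∧ 0 < b ∧ 0 < c) ∨ (a < 0 ∧ b < 0 ∧ c < 0)))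
    (h : SplitsMod a b c (a * b * c).natAbs) : IsIsotropic a b c := by
  have hsign' : (a * b < 0 ∧ a * c < 0) ∨ (b * c < 0 ∧ b * a < 0) ∨ (c * a < 0 ∧ c * b < 0) := by
    simp only [mul_neg_iff]; omega
  have h' : SplitsMod b c a (b * c * a).natAbs := by rw [← mul_rotate]; exact h.rotate
  have h'' : SplitsMod c a b (c * a * b).natAbs := by rw [← mul_rotate]; exact h'.rotate
  rcases hsign' with ⟨h₁, h₂⟩ | ⟨h₁, h₂⟩ | ⟨h₁, h₂⟩
  · exact isIsotropic_of_splitsMod h₁ h₂ h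
  · exact (isIsotropic_of_splitsMod h₁ h₂ h').rotate.rotate
  · exact (isIsotropic_of_splitsMod h₁ h₂ h'').rotate

theorem IsIsotropic.exists_primitive (h : IsIsotropic a b c) :
    ∃ q₁ q₂ q₃ : ℤ, a * q₁ ^ 2 + b * q₂ ^ 2 + c * q₃ ^ 2 = 0 ∧
      ∀ p : ℤ, Prime p → p ∣ q₁ → p ∣ q₂ → ¬ p ∣ q₃ := by
  obtain ⟨x, y, z, hne, h⟩ := h
  set g : ℤ := ((Int.gcd (Int.gcd x y) z : ℕ) : ℤ)
  have hg : g ≠ 0 := by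
    simpa [g, Int.gcd_eq_zero_iff] using hne
  obtain ⟨q₁, hx⟩ : g ∣ x := (Int.gcd_dvd_left _ _).trans (Int.gcd_dvd_left _ _)
  obtain ⟨q₂, hy⟩ : g ∣ y := (Int.gcd_dvd_left _ _).trans (Int.gcd_dvd_right _ _)
  obtain ⟨q₃, hz⟩ : g ∣ z := Int.gcd_dvd_right _ _
  refine ⟨q₁, q₂, q₃, ?_, fun p hp h₁ h₂ h₃ => hp.not_isUnit (isUnit_of_dvd_one ?_)⟩
  · have : g ^ 2 * (a * q₁ ^ 2 + b * q₂ ^ 2 + c * q₃ ^ 2) = 0 := by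
      rw [hx, hy, hz] at h; linear_combination h
    exact (mul_eq_zero.1 this).resolve_left (pow_ne_zero 2 hg)
  have hgp : g * p ∣ g := Int.dvd_coe_gcd (Int.dvd_coe_gcd (hx ▸ mul_dvd_mul_left g h₁)
    (hy ▸ mul_dvd_mul_left g h₂)) (hz ▸ mul_dvd_mul_left g h₃)
  exact (mul_dvd_mul_iff_left hg).1 (by rwa [mul_one])

variable {q₁ q₂ q₃ : ℤ}

theorem dvd_of_dvd_of_dvd_of_isotropic (hq : a * q₁ ^ 2 + b * q₂ ^ 2 + c * q₃ ^ 2 = 0)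
    (hsa : Squarefree a) {p : ℤ} (hp : Prime p) (h₂ : p ∣ q₂) (h₃ : p ∣ q₃) : p ∣ q₁ := by
  by_contra h₁
  have hpq : p ^ 2 ∣ a * q₁ ^ 2 := by
    rw [show a * q₁ ^ 2 = -(b * q₂ ^ 2 + c * q₃ ^ 2) by linear_combination hq]
    exact (dvd_add ((pow_dvd_pow_of_dvd h₂ 2).mul_left b)
      ((pow_dvd_pow_of_dvd h₃ 2).mul_left c)).neg_right
  have hpa : p * p ∣ a :=
    sq p ▸ ((hp.irreducible.coprime_iff_not_dvd.2 h₁).pow).dvd_of_dvd_mul_right hpq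
  exact hp.not_isUnit (hsa p hpa)

theorem exists_polar_eq_one (hsa : Squarefree a) (hsb : Squarefree b) (hsc : Squarefree c)
    (hab : IsCoprime a b) (hac : IsCoprime a c) (hbc : IsCoprime b c)
    (hq : a * q₁ ^ 2 + b * q₂ ^ 2 + c * q₃ ^ 2 = 0)
    (hprim : ∀ p : ℤ, Prime p → p ∣ q₁ → p ∣ q₂ → ¬ p ∣ q₃) :
    ∃ r₁ r₂ r₃ : ℤ, a * q₁ * r₁ + b * q₂ * r₂ + c * q₃ * r₃ = 1 := by
  have key : ∀ p : ℤ, Prime p → p ∣ a * q₁ → p ∣ b * q₂ → ¬ p ∣ c * q₃ := by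
    intro p hp h₁ h₂ h₃
    have coprime {u v : ℤ} (huv : IsCoprime u v) (hu : p ∣ u) : ¬ p ∣ v :=
      fun hv => hp.not_isUnit (huv.isUnit_of_dvd' hu hv)
    by_cases hpa : p ∣ a
    · have h₂ := (hp.dvd_or_dvd h₂).resolve_left (coprime hab hpa)
      have h₃ := (hp.dvd_or_dvd h₃).resolve_left (coprime hac hpa)
      exact hprim p hp (dvd_of_dvd_of_dvd_of_isotropic hq hsa hp h₂ h₃) h₂ h₃
    have h₁ := (hp.dvd_or_dvd h₁).resolve_left hpa
    by_cases hpb : p ∣ b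
    · have h₃ := (hp.dvd_or_dvd h₃).resolve_left (coprime hbc hpb)
      exact hprim p hp h₁ (dvd_of_dvd_of_dvd_of_isotropic (a := b) (b := c) (c := a)
        (by linear_combination hq) hsb hp h₃ h₁) h₃
    · have h₂ := (hp.dvd_or_dvd h₂).resolve_left hpb
      exact hprim p hp h₁ h₂ (dvd_of_dvd_of_dvd_of_isotropic (a := c) (b := a) (c := b)
        (by linear_combination hq) hsc hp h₁ h₂)
  have hg := Int.gcd_eq_gcd_ab (a * q₁) (b * q₂)
  obtain ⟨u, v, huv⟩ : IsCoprime (Int.gcd (a * q₁) (b * q₂) : ℤ) (c * q₃) := by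
    refine isCoprime_of_prime_dvd ?_ fun p hp hpg =>
      key p hp (hpg.trans (Int.gcd_dvd_left _ _)) (hpg.trans (Int.gcd_dvd_right _ _))
    rintro ⟨h0, hc⟩
    have h2 : (2 : ℤ) ∣ Int.gcd (a * q₁) (b * q₂) := by simp [h0]
    exact key 2 Int.prime_two (h2.trans (Int.gcd_dvd_left _ _))
      (h2.trans (Int.gcd_dvd_right _ _)) (by simp [hc])
  exact ⟨u * Int.gcdA (a * q₁) (b * q₂), u * Int.gcdB (a * q₁) (b * q₂), v,
    by linear_combination huv - u * hg⟩

theorem exists_eq_of_modEq (hq : a * q₁ ^ 2 + b * q₂ ^ 2 + c * q₃ ^ 2 = 0) {v₁ v₂ v₃ s n : ℤ}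
    (hv : a * q₁ * v₁ + b * q₂ * v₂ + c * q₃ * v₃ = s)
    (hn : n ≡ a * v₁ ^ 2 + b * v₂ ^ 2 + c * v₃ ^ 2 [ZMOD 2 * s]) :
    ∃ x y z : ℤ, a * x ^ 2 + b * y ^ 2 + c * z ^ 2 = n := by
  obtain ⟨t, ht⟩ := hn.symm.dvd
  exact ⟨t * q₁ + v₁, t * q₂ + v₂, t * q₃ + v₃,
    by linear_combination t ^ 2 * hq + 2 * t * hv - ht⟩

theorem exists_eq_of_rotate {n : ℤ} (h : ∃ x y z : ℤ, b * x ^ 2 + c * y ^ 2 + a * z ^ 2 = n) :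
    ∃ x y z : ℤ, a * x ^ 2 + b * y ^ 2 + c * z ^ 2 = n := by
  obtain ⟨x, y, z, h⟩ := h
  exact ⟨z, x, y, by linear_combination h⟩

variable {r₁ r₂ r₃ F : ℤ}

theorem exists_eq_of_modEq_shift (hq : a * q₁ ^ 2 + b * q₂ ^ 2 + c * q₃ ^ 2 = 0)
    (hr : a * q₁ * r₁ + b * q₂ * r₂ + c * q₃ * r₃ = 1)
    (hF : a * r₁ ^ 2 + b * r₂ ^ 2 + c * r₃ ^ 2 = F) {k n : ℤ}
    (hn : n ≡ k ^ 2 * F + (a - 2 * a ^ 2 * q₁ * r₁ + a ^ 2 * q₁ ^ 2 * F) [ZMOD 2 * k]) :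
    ∃ x y z : ℤ, a * x ^ 2 + b * y ^ 2 + c * z ^ 2 = n := by
  -- `v = k r + w` with `w = e₁ - a q₁ r ⊥ q`, and `Q(w) = a - 2 a² q₁ r₁ + a² q₁² F`
  refine exists_eq_of_modEq hq (v₁ := (k - a * q₁) * r₁ + 1) (v₂ := (k - a * q₁) * r₂)
    (v₃ := (k - a * q₁) * r₃) (by linear_combination (k - a * q₁) * hr) (hn.trans ?_)
  refine Int.modEq_iff_dvd.2 ⟨a * r₁ - a * q₁ * F, ?_⟩
  linear_combination (k - a * q₁) ^ 2 * hF

theorem exists_eq_of_odd_shift (hq : a * q₁ ^ 2 + b * q₂ ^ 2 + c * q₃ ^ 2 = 0)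
    (hr : a * q₁ * r₁ + b * q₂ * r₂ + c * q₃ * r₃ = 1)
    (hF : a * r₁ ^ 2 + b * r₂ ^ 2 + c * r₃ ^ 2 = F)
    (hE : ¬ Even (a - 2 * a ^ 2 * q₁ * r₁ + a ^ 2 * q₁ ^ 2 * F)) {n : ℤ} (hn : ¬ Even (F - n)) :
    ∃ x y z : ℤ, a * x ^ 2 + b * y ^ 2 + c * z ^ 2 = n := by
  refine exists_eq_of_modEq_shift hq hr hF (k := 1) (Int.modEq_iff_dvd.2 ?_)
  rw [mul_one, ← even_iff_two_dvd]
  simp [parity_simps] at hE hn ⊢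
  tauto

theorem exists_eq_of_even_coeff (hq : a * q₁ ^ 2 + b * q₂ ^ 2 + c * q₃ ^ 2 = 0)
    (hr : a * q₁ * r₁ + b * q₂ * r₂ + c * q₃ * r₃ = 1)
    (hF : a * r₁ ^ 2 + b * r₂ ^ 2 + c * r₃ ^ 2 = F) (hsa : Squarefree a) (ha : Even a) {n : ℤ}
    (hn : Even n) (hn4 : ¬ 4 ∣ n) : ∃ x y z : ℤ, a * x ^ 2 + b * y ^ 2 + c * z ^ 2 = n := by
  obtain ⟨a', rfl⟩ := ha
  obtain ⟨n', rfl⟩ := hn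
  obtain ⟨u, rfl⟩ : Odd a' := Int.not_even_iff_odd.1 fun ⟨u, hu⟩ =>
    Int.prime_two.not_isUnit (hsa 2 ⟨u, by rw [hu]; ring⟩)
  obtain ⟨v, rfl⟩ : Odd n' := Int.not_even_iff_odd.1 fun ⟨v, hv⟩ => hn4 ⟨v, by rw [hv]; ring⟩
  refine exists_eq_of_modEq_shift hq hr hF (k := 2) (Int.modEq_iff_dvd.2 ?_)
  exact Dvd.intro (F + u - v - 2 * (2 * u + 1) ^ 2 * q₁ * r₁ + (2 * u + 1) ^ 2 * q₁ ^ 2 * F)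
    (by ring)

theorem exists_eq_of_polar_eq_one (hsa : Squarefree a) (hsb : Squarefree b)
    (hsc : Squarefree c) (hab : IsCoprime a b) (hq : a * q₁ ^ 2 + b * q₂ ^ 2 + c * q₃ ^ 2 = 0)
    (hr : a * q₁ * r₁ + b * q₂ * r₂ + c * q₃ * r₃ = 1) (n : ℤ) :
    ∃ x y z : ℤ, a * x ^ 2 + b * y ^ 2 + c * z ^ 2 = n := by
  obtain ⟨F, hF⟩ : ∃ F, a * r₁ ^ 2 + b * r₂ ^ 2 + c * r₃ ^ 2 = F := ⟨_, rfl⟩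
  have hq' : b * q₂ ^ 2 + c * q₃ ^ 2 + a * q₁ ^ 2 = 0 := by linear_combination hq
  have hr' : b * q₂ * r₂ + c * q₃ * r₃ + a * q₁ * r₁ = 1 := by linear_combination hr
  have hF' : b * r₂ ^ 2 + c * r₃ ^ 2 + a * r₁ ^ 2 = F := by linear_combination hF
  have hq'' : c * q₃ ^ 2 + a * q₁ ^ 2 + b * q₂ ^ 2 = 0 := by linear_combination hq
  have hr'' : c * q₃ * r₃ + a * q₁ * r₁ + b * q₂ * r₂ = 1 := by linear_combination hr
  have hF'' : c * r₃ ^ 2 + a * r₁ ^ 2 + b * r₂ ^ 2 = F := by linear_combination hF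
  by_cases hnF : Even (F - n)
  · exact exists_eq_of_modEq hq hr
      (Int.modEq_iff_dvd.2 (by simpa [hF] using even_iff_two_dvd.1 hnF))
  by_cases hEa : Even (a - 2 * a ^ 2 * q₁ * r₁ + a ^ 2 * q₁ ^ 2 * F)
  swap
  · exact exists_eq_of_odd_shift hq hr hF hEa hnF
  by_cases hEb : Even (b - 2 * b ^ 2 * q₂ * r₂ + b ^ 2 * q₂ ^ 2 * F)
  swap
  · exact exists_eq_of_rotate (exists_eq_of_odd_shift hq' hr' hF' hEb hnF)
  by_cases hEc : Even (c - 2 * c ^ 2 * q₃ * r₃ + c ^ 2 * q₃ ^ 2 * F)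
  swap
  · exact exists_eq_of_rotate
      (exists_eq_of_rotate (exists_eq_of_odd_shift hq'' hr'' hF'' hEc hnF))
  -- Now `F` is odd and `n` even; `v = 2 r` reaches `n ≡ 0 mod 4`, an even coefficient reaches
  -- `n ≡ 2 mod 4`, and if `a, b, c` are all odd then so are `q₁, q₂, q₃`, contradicting `Q(q) = 0`.
  have hab2 : ¬ (Even a ∧ Even b) := fun ⟨ha, hb⟩ => Int.prime_two.not_isUnit
    (hab.isUnit_of_dvd' (even_iff_two_dvd.1 ha) (even_iff_two_dvd.1 hb))
  have hn : Even n := by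
    simp [parity_simps] at hnF hEa hEb
    tauto
  by_cases hn4 : 4 ∣ n
  · exact exists_eq_of_modEq hq (v₁ := 2 * r₁) (v₂ := 2 * r₂) (v₃ := 2 * r₃) (s := 2)
      (by linear_combination 2 * hr)
      (Int.modEq_iff_dvd.2 (dvd_sub (Dvd.intro F (by linear_combination -4 * hF)) hn4))
  by_cases ha : Even a
  · exact exists_eq_of_even_coeff hq hr hF hsa ha hn hn4
  by_cases hb : Even b
  · exact exists_eq_of_rotate (exists_eq_of_even_coeff hq' hr' hF' hsb hb hn hn4)
  by_cases hc : Even c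
  · exact exists_eq_of_rotate
      (exists_eq_of_rotate (exists_eq_of_even_coeff hq'' hr'' hF'' hsc hc hn hn4))
  have hodd := congrArg Even hq
  simp [parity_simps] at hodd hnF hEa hEb hEc
  tauto

end

theorem stmt14 (a b c : ℤ) (ha : a ≠ 0) (hb : b ≠ 0) (hc : c ≠ 0)
    (hsa : Squarefree a) (hsb : Squarefree b) (hsc : Squarefree c)
    (hab : IsCoprime a b) (hac : IsCoprime a c) (hbc : IsCoprime b c)
    (hsign : ¬ ((0 < a ∧ 0 < b ∧ 0 < c) ∨ (a < 0 ∧ b < 0 ∧ c < 0))) :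
    (∀ n : ℤ, ∃ x y z : ℤ, a * x ^ 2 + b * y ^ 2 + c * z ^ 2 = n) ↔
      (∃ x y z : ℤ, a * x ^ 2 + b * y ^ 2 + c * z ^ 2 ≡ -(a * b * c) [ZMOD (a * b * c) ^ 2]) := by
  refine ⟨fun h => ?_, fun ⟨x, y, z, h⟩ => ?_⟩
  · obtain ⟨x, y, z, h⟩ := h (-(a * b * c))
    exact ⟨x, y, z, h ▸ Int.ModEq.refl _⟩
  have hiso := isIsotropic_of_splitsMod_of_ne_zero ha hb hc hsign
    (splitsMod_of_modEq ha hb hc hsa hsb hsc hab hac hbc h)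
  obtain ⟨q₁, q₂, q₃, hq, hprim⟩ := hiso.exists_primitive
  obtain ⟨r₁, r₂, r₃, hr⟩ := exists_polar_eq_one hsa hsb hsc hab hac hbc hq hprim
  exact exists_eq_of_polar_eq_one hsa hsb hsc hab hq hr
end

section
/- Suppose a, b, c are positive and all odd, and suppose the Jacobi symbols satisfy (-bc | a) = 1, (-ac | b) = 1, and (-ab | c) = 1. Then (a-1)/2, (b-1)/2, and (c-1)/2 all have the same parity; equivalently, a ≡ b ≡ c (mod 4). -/
/-!
Write `ε(n) = (-1)^(n/2) = (-1 | n)` for odd `n`. Expanding `(-bc | a) = ε(a) (b | a) (c | a)` and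
multiplying the three hypotheses, each pair of mutually inverse symbols `(a | b) (b | a)` combines by
quadratic reciprocity into `(-1)^((a/2) (b/2))`. With `u = a/2`, `v = b/2`, `w = c/2` this gives
`(-1)^(u + v + w + uv + uw + vw) = 1`, and that exponent is even exactly when `u, v, w` have the same
parity.
-/

theorem jacobiSym_mul_jacobiSym_swap {m n : ℕ} (hm : Odd m) (hn : Odd n) (h : m.Coprime n) :
    jacobiSym m n * jacobiSym n m = (-1) ^ (m / 2 * (n / 2)) := by
  rw [jacobiSym.quadratic_reciprocity hm hn, mul_assoc, ← sq,
    jacobiSym.sq_one (by rw [Int.gcd_natCast_natCast]; exact h.symm), mul_one]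

theorem jacobiSym_neg_mul {m n : ℤ} {l : ℕ} (hl : Odd l) :
    jacobiSym (-m * n) l = (-1) ^ (l / 2) * jacobiSym m l * jacobiSym n l := by
  rw [neg_eq_neg_one_mul m, jacobiSym.mul_left, jacobiSym.mul_left, jacobiSym.at_neg_one hl,
    ZMod.χ₄_eq_neg_one_pow (Nat.odd_iff.mp hl)]

theorem even_sum_add_sum_mul_iff (u v w : ℕ) :
    Even (u + v + w + u * v + u * w + v * w) ↔ u % 2 = v % 2 ∧ v % 2 = w % 2 := by
  rw [Nat.even_iff]
  rcases Nat.mod_two_eq_zero_or_one u with hu | hu <;>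
  rcases Nat.mod_two_eq_zero_or_one v with hv | hv <;>
  rcases Nat.mod_two_eq_zero_or_one w with hw | hw <;>
  simp [Nat.add_mod, Nat.mul_mod, hu, hv, hw]

theorem div_two_mod_two_eq_of_jacobiSym_neg_mul_eq_one {A B C : ℕ}
    (hA : Odd A) (hB : Odd B) (hC : Odd C)
    (hAB : A.Coprime B) (hAC : A.Coprime C) (hBC : B.Coprime C)
    (hjA : jacobiSym (-B * C) A = 1) (hjB : jacobiSym (-A * C) B = 1)
    (hjC : jacobiSym (-A * B) C = 1) :
    A / 2 % 2 = B / 2 % 2 ∧ B / 2 % 2 = C / 2 % 2 := by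
  rw [jacobiSym_neg_mul hA] at hjA
  rw [jacobiSym_neg_mul hB] at hjB
  rw [jacobiSym_neg_mul hC] at hjC
  have hprod : (-1 : ℤ) ^ (A / 2 + B / 2 + C / 2 + A / 2 * (B / 2) + A / 2 * (C / 2)
      + B / 2 * (C / 2)) = 1 := by
    calc _ = ((-1) ^ (A / 2) * jacobiSym B A * jacobiSym C A)
          * ((-1) ^ (B / 2) * jacobiSym A B * jacobiSym C B)
          * ((-1) ^ (C / 2) * jacobiSym A C * jacobiSym B C) := by
          rw [pow_add, pow_add, pow_add, pow_add, pow_add,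
            ← jacobiSym_mul_jacobiSym_swap hA hB hAB, ← jacobiSym_mul_jacobiSym_swap hA hC hAC,
            ← jacobiSym_mul_jacobiSym_swap hB hC hBC]
          ring
      _ = 1 := by rw [hjA, hjB, hjC, one_mul, one_mul]
  rwa [neg_one_pow_eq_one_iff_even (by decide), even_sum_add_sum_mul_iff] at hprod

theorem stmt19_general (a b c : ℤ)
    (hab : IsCoprime a b) (hac : IsCoprime a c) (hbc : IsCoprime b c)
    (hapos : 0 < a) (hbpos : 0 < b) (hcpos : 0 < c)
    (hoa : Odd a) (hob : Odd b) (hoc : Odd c)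
    (hja : jacobiSym (-b * c) a.natAbs = 1)
    (hjb : jacobiSym (-a * c) b.natAbs = 1)
    (hjc : jacobiSym (-a * b) c.natAbs = 1) :
    ((a - 1) / 2 ≡ (b - 1) / 2 [ZMOD 2] ∧ (b - 1) / 2 ≡ (c - 1) / 2 [ZMOD 2]) ∧
    (a ≡ b [ZMOD 4] ∧ b ≡ c [ZMOD 4]) := by
  lift a to ℕ using hapos.le with A
  lift b to ℕ using hbpos.le with B
  lift c to ℕ using hcpos.le with C
  simp only [Int.natAbs_natCast] at hja hjb hjc
  rw [Nat.isCoprime_iff_coprime] at hab hac hbc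
  rw [Int.odd_coe_nat] at hoa hob hoc
  have hparity := div_two_mod_two_eq_of_jacobiSym_neg_mul_eq_one hoa hob hoc hab hac hbc hja hjb hjc
  have hA := Nat.odd_iff.mp hoa
  have hB := Nat.odd_iff.mp hob
  have hC := Nat.odd_iff.mp hoc
  simp only [Int.ModEq]
  omega

theorem stmt19 (a b c : ℤ) (ha : a ≠ 0) (hb : b ≠ 0) (hc : c ≠ 0)
    (hsa : Squarefree a) (hsb : Squarefree b) (hsc : Squarefree c)
    (hab : IsCoprime a b) (hac : IsCoprime a c) (hbc : IsCoprime b c)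
    (hapos : 0 < a) (hbpos : 0 < b) (hcpos : 0 < c)
    (hoa : Odd a) (hob : Odd b) (hoc : Odd c)
    (hja : jacobiSym (-b * c) a.natAbs = 1)
    (hjb : jacobiSym (-a * c) b.natAbs = 1)
    (hjc : jacobiSym (-a * b) c.natAbs = 1) :
    ((a - 1) / 2 ≡ (b - 1) / 2 [ZMOD 2] ∧ (b - 1) / 2 ≡ (c - 1) / 2 [ZMOD 2]) ∧
    (a ≡ b [ZMOD 4] ∧ b ≡ c [ZMOD 4]) :=
  stmt19_general a b c hab hac hbc hapos hbpos hcpos hoa hob hoc hja hjb hjc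
end
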